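/- arXiv:1109.5624 — 6 statements merged into one kernel-verified Lean document; each statement's English description precedes it below -/
import Mathlib

section
/- Let V be a left vector space of finite dimension n over a division ring R and let 1 ≤ k ≤ n−1. Then the diameter of the Grassmann graph Γ_k(V), i.e. the supremum (in the extended natural numbers) of the distances between pairs of vertices, equals min{k, n−k}. -/
open Module

/-- The Grassmann graph `Γ_k(V)`: vertices are the `k`-dimensional subspaces of `V`,
two distinct vertices being adjacent iff their intersection has dimension `k - 1`. -/
def grassmannGraph (R V : Type*) [DivisionRing R] [AddCommGroup V] [Module R V] (k : ℕ) :
    SimpleGraph {W : Submodule R V // Module.finrank R W = k} where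
  Adj X Y := X ≠ Y ∧ Module.finrank R ↥(X.1 ⊓ Y.1) = k - 1
  symm := by
    constructor
    rintro X Y ⟨h1, h2⟩
    exact ⟨h1.symm, by rwa [inf_comm]⟩
  loopless := by
    constructor
    rintro X ⟨h1, _⟩
    exact h1 rfl

/-- A graph embedding: an injective map such that adjacency holds iff it holds for images. -/
def IsGraphEmbedding {α β : Type*} (G : SimpleGraph α) (G' : SimpleGraph β) (f : α → β) : Prop :=
  Function.Injective f ∧ ∀ a b, G.Adj a b ↔ G'.Adj (f a) (f b)

/-- An isometric embedding: a graph embedding preserving distances. -/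
def IsIsometricEmbedding {α β : Type*} (G : SimpleGraph α) (G' : SimpleGraph β) (f : α → β) : Prop :=
  IsGraphEmbedding G G' f ∧ ∀ a b, G'.dist (f a) (f b) = G.dist a b

/-- A maximal clique in a graph. -/
def IsMaxClique {α : Type*} (G : SimpleGraph α) (C : Set α) : Prop :=
  G.IsClique C ∧ ∀ D : Set α, G.IsClique D → C ⊆ D → C = D

/-- A semilinear `m`-embedding: an injective semilinear map sending every linearly
independent `m`-element subset to a linearly independent (`m`-element) subset. -/
def IsSemilinearMEmbedding {R R' V V' : Type*} [DivisionRing R] [DivisionRing R']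
    [AddCommGroup V] [Module R V] [AddCommGroup V'] [Module R' V']
    (σ : R →+* R') (l : V →ₛₗ[σ] V') (m : ℕ) : Prop :=
  Function.Injective l ∧ ∀ s : Finset V, s.card = m →
    LinearIndependent R (fun x : s => (x : V)) → LinearIndependent R' (fun x : s => l x)

/-!
The distance between `k`-subspaces `A` and `B` is `k - dim (A ⊓ B)`. Along an edge `X ~ Y`
the dimension of `X ⊓ B` changes by at most one, which gives the lower bound; conversely, if
`X ≠ B`, replacing a hyperplane of `X` through `X ⊓ B` by a vector of `B \ X` gives a neighbour
of `X` meeting `B` in one more dimension. Since `dim (A ⊓ B) ≥ 2k - n`, the diameter is at most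
`min k (n - k)`, and the bound is attained by a pair built from complementary subspaces.
-/

namespace SimpleGraph

variable {α : Type*} {G : SimpleGraph α}

lemma le_add_length_of_forall_adj (f : α → ℕ) (hf : ∀ a c, G.Adj a c → f a ≤ f c + 1)
    {a b : α} (p : G.Walk a b) : f a ≤ f b + p.length := by
  induction p with
  | nil => simp
  | cons h p ih =>
    have := hf _ _ h
    simp only [Walk.length_cons]
    omega

lemma sub_le_edist_of_forall_adj (f : α → ℕ) (hf : ∀ a c, G.Adj a c → f a ≤ f c + 1)
    (a b : α) : ((f a - f b : ℕ) : ℕ∞) ≤ G.edist a b :=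
  le_iInf fun p => by
    have := le_add_length_of_forall_adj f hf p
    exact_mod_cast (by omega : f a - f b ≤ p.length)

lemma edist_le_of_forall_exists_adj (f : α → ℕ) {b : α}
    (hf : ∀ a, a ≠ b → ∃ c, G.Adj a c ∧ f c < f a) (a : α) : G.edist a b ≤ f a := by
  induction hm : f a using Nat.strong_induction_on generalizing a with
  | _ m ih =>
    rcases eq_or_ne a b with rfl | hab
    · simp
    obtain ⟨c, hac, hc⟩ := hf a hab
    calc G.edist a b ≤ G.edist a c + G.edist c b := G.edist_triangle
      _ ≤ 1 + f c := add_le_add (edist_eq_one_iff_adj.mpr hac).le (ih _ (hm ▸ hc) c rfl)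
      _ ≤ m := by exact_mod_cast (by omega : 1 + f c ≤ m)

end SimpleGraph

namespace Submodule

variable {R V : Type*} [DivisionRing R] [AddCommGroup V] [Module R V] [FiniteDimensional R V]

lemma exists_le_le_finrank_eq {W A : Submodule R V} (hWA : W ≤ A) {j : ℕ}
    (hWj : finrank R W ≤ j) (hjA : j ≤ finrank R A) :
    ∃ H : Submodule R V, W ≤ H ∧ H ≤ A ∧ finrank R H = j := by
  induction j, hWj using Nat.le_induction with
  | base => exact ⟨W, le_rfl, hWA, rfl⟩
  | succ j hj ih =>
    obtain ⟨H, hWH, hHA, hH⟩ := ih (by omega)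
    obtain ⟨x, hxA, hxH⟩ := SetLike.exists_of_lt (hHA.lt_of_ne (by rintro rfl; omega))
    exact ⟨H ⊔ R ∙ x, hWH.trans le_sup_left,
      sup_le hHA ((span_singleton_le_iff_mem x A).mpr hxA),
      by rw [finrank_sup_span_singleton hxH, hH]⟩

lemma finrank_inf_add_finrank_inf_le (A B C : Submodule R V) :
    finrank R ↥(C ⊓ A) + finrank R ↥(C ⊓ B) ≤ finrank R C + finrank R ↥(A ⊓ B) := by
  have hsum := finrank_sup_add_finrank_inf_eq (C ⊓ A) (C ⊓ B)
  have hsup : finrank R ↥(C ⊓ A ⊔ C ⊓ B) ≤ finrank R C :=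
    finrank_mono (sup_le inf_le_left inf_le_left)
  have hinf : finrank R ↥(C ⊓ A ⊓ (C ⊓ B)) ≤ finrank R ↥(A ⊓ B) :=
    finrank_mono (le_inf (inf_le_left.trans inf_le_right) (inf_le_right.trans inf_le_right))
  omega

lemma exists_finrank_inf_eq {k j : ℕ} (hk : k ≤ finrank R V) (hj : j ≤ k)
    (hkj : k - j ≤ finrank R V - k) :
    ∃ A B : Submodule R V,
      finrank R A = k ∧ finrank R B = k ∧ finrank R ↥(A ⊓ B) = j := by
  obtain ⟨A, -, -, hA⟩ := exists_le_le_finrank_eq (bot_le : ⊥ ≤ (⊤ : Submodule R V))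
    (by simp) (finrank_top R V ▸ hk)
  obtain ⟨A', hAA'⟩ := A.exists_isCompl
  have hA' := finrank_add_eq_of_isCompl hAA'
  obtain ⟨C, -, hCA, hC⟩ := exists_le_le_finrank_eq (bot_le : ⊥ ≤ A) (by simp) (hA ▸ hj)
  obtain ⟨D, -, hDA', hD⟩ := exists_le_le_finrank_eq (bot_le : ⊥ ≤ A') (by simp)
    (j := k - j) (by omega)
  have hDA : D ⊓ A = ⊥ := disjoint_iff.mp (hAA'.disjoint.symm.mono_left hDA')
  have hCD : C ⊓ D = ⊥ := by
    rw [eq_bot_iff, ← hDA]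
    exact le_inf inf_le_right (inf_le_left.trans hCA)
  refine ⟨A, C ⊔ D, hA, ?_, ?_⟩
  · have := finrank_sup_add_finrank_inf_eq C D
    rw [hCD, finrank_bot] at this
    omega
  · rw [inf_comm, sup_inf_assoc_of_le D hCA, hDA, sup_bot_eq, hC]

end Submodule

namespace grassmannGraph

variable {R V : Type*} [DivisionRing R] [AddCommGroup V] [Module R V] [FiniteDimensional R V]
  {k : ℕ}

lemma finrank_inf_le (A B : {W : Submodule R V // finrank R W = k}) :
    finrank R ↥(A.1 ⊓ B.1) ≤ k :=
  (Submodule.finrank_mono inf_le_left).trans_eq A.2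

lemma eq_of_finrank_inf_eq {A B : {W : Submodule R V // finrank R W = k}}
    (h : finrank R ↥(A.1 ⊓ B.1) = k) : A = B := by
  have hAB : A.1 ⊓ B.1 = A.1 := Submodule.eq_of_le_of_finrank_eq inf_le_left (by rw [h, A.2])
  exact Subtype.ext <| Submodule.eq_of_le_of_finrank_eq (hAB ▸ inf_le_right) (A.2.trans B.2.symm)

lemma finrank_inf_lt_of_ne {A B : {W : Submodule R V // finrank R W = k}} (h : A ≠ B) :
    finrank R ↥(A.1 ⊓ B.1) < k :=
  (finrank_inf_le A B).lt_of_ne (mt eq_of_finrank_inf_eq h)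

lemma finrank_inf_le_succ_of_adj {X Y : {W : Submodule R V // finrank R W = k}}
    (h : (grassmannGraph R V k).Adj X Y) (B : Submodule R V) :
    finrank R ↥(X.1 ⊓ B) ≤ finrank R ↥(Y.1 ⊓ B) + 1 := by
  have := Submodule.finrank_inf_add_finrank_inf_le Y.1 B X.1
  have := finrank_inf_lt_of_ne h.1
  rw [X.2, h.2] at *
  omega

lemma exists_adj_finrank_inf_lt {X B : {W : Submodule R V // finrank R W = k}} (hXB : X ≠ B) :
    ∃ C, (grassmannGraph R V k).Adj X C ∧
      finrank R ↥(X.1 ⊓ B.1) < finrank R ↥(C.1 ⊓ B.1) := by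
  have hlt := finrank_inf_lt_of_ne hXB
  obtain ⟨w, hwB, hwX⟩ : ∃ w ∈ B.1, w ∉ X.1 := SetLike.not_le_iff_exists.mp fun hBX =>
    hXB (Subtype.ext (Submodule.eq_of_le_of_finrank_eq hBX (B.2.trans X.2.symm))).symm
  obtain ⟨H, hXBH, hHX, hH⟩ :=
    Submodule.exists_le_le_finrank_eq (inf_le_left : X.1 ⊓ B.1 ≤ X.1) (j := k - 1)
      (by omega) (by omega)
  have hwH : w ∉ H := fun hw => hwX (hHX hw)
  let C : {W : Submodule R V // finrank R W = k} :=
    ⟨H ⊔ R ∙ w, by rw [Submodule.finrank_sup_span_singleton hwH, hH]; omega⟩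
  have hXC : X ≠ C := fun h =>
    hwX (h ▸ Submodule.mem_sup_right (Submodule.mem_span_singleton_self w))
  have hHXC : k - 1 ≤ finrank R ↥(X.1 ⊓ C.1) :=
    hH ▸ Submodule.finrank_mono (le_inf hHX le_sup_left)
  refine ⟨C, ⟨hXC, by have := finrank_inf_lt_of_ne hXC; omega⟩, ?_⟩
  have hwXB : w ∉ X.1 ⊓ B.1 := fun hw => hwX hw.1
  calc finrank R ↥(X.1 ⊓ B.1) < finrank R ↥(X.1 ⊓ B.1 ⊔ R ∙ w) := by
        rw [Submodule.finrank_sup_span_singleton hwXB]; omega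
    _ ≤ finrank R ↥(C.1 ⊓ B.1) := Submodule.finrank_mono <|
        le_inf (sup_le_sup_right hXBH _) (sup_le inf_le_right (by simpa using hwB))

theorem edist_eq (A B : {W : Submodule R V // finrank R W = k}) :
    (grassmannGraph R V k).edist A B = (k - finrank R ↥(A.1 ⊓ B.1) : ℕ) := by
  refine le_antisymm ?_ ?_
  · exact SimpleGraph.edist_le_of_forall_exists_adj (G := grassmannGraph R V k)
      (fun X => k - finrank R ↥(X.1 ⊓ B.1)) (b := B) (fun X hXB => by
        obtain ⟨C, hXC, hC⟩ := exists_adj_finrank_inf_lt hXB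
        exact ⟨C, hXC, by have := finrank_inf_lt_of_ne hXB; omega⟩) A
  · have h := SimpleGraph.sub_le_edist_of_forall_adj (G := grassmannGraph R V k)
      (fun X => k - finrank R ↥(X.1 ⊓ B.1))
      (fun X Y h => by have := finrank_inf_le_succ_of_adj h.symm B.1; omega) A B
    beta_reduce at h
    rwa [inf_idem, B.2, Nat.sub_self, Nat.sub_zero] at h

end grassmannGraph

theorem grassmann_diam_general
    (R V : Type*) [DivisionRing R] [AddCommGroup V] [Module R V] [FiniteDimensional R V]
    (n k : ℕ) (hn : Module.finrank R V = n) (hk2 : k ≤ n - 1) :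
    (grassmannGraph R V k).ediam = (min k (n - k) : ℕ) := by
  apply le_antisymm
  · refine SimpleGraph.ediam_le_of_edist_le fun A B => ?_
    have hsum := Submodule.finrank_sup_add_finrank_inf_eq A.1 B.1
    have hsup := hn ▸ Submodule.finrank_le (A.1 ⊔ B.1)
    rw [A.2, B.2] at hsum
    rw [grassmannGraph.edist_eq]
    exact_mod_cast (by omega : k - finrank R ↥(A.1 ⊓ B.1) ≤ min k (n - k))
  · obtain ⟨A, B, hA, hB, hAB⟩ := Submodule.exists_finrank_inf_eq (R := R) (V := V)
      (k := k) (j := k - min k (n - k)) (by omega) (by omega) (by omega)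
    calc ((min k (n - k) : ℕ) : ℕ∞) = (grassmannGraph R V k).edist ⟨A, hA⟩ ⟨B, hB⟩ := by
          rw [grassmannGraph.edist_eq, hAB]; congr 1; omega
      _ ≤ (grassmannGraph R V k).ediam := SimpleGraph.edist_le_ediam

/-- For `1 ≤ k ≤ n-1`, the diameter of the Grassmann graph `Γ_k(V)`,
i.e. the supremum in `ℕ∞` of the distances between pairs of vertices,
equals `min k (n - k)`. -/
theorem grassmann_diam
    (R V : Type*) [DivisionRing R] [AddCommGroup V] [Module R V] [FiniteDimensional R V]
    (n k : ℕ) (hn : Module.finrank R V = n) (hk1 : 1 ≤ k) (hk2 : k ≤ n - 1) :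
    (grassmannGraph R V k).ediam = (min k (n - k) : ℕ) :=
  grassmann_diam_general R V n k hn hk2
end

section
/- Let V be a left vector space of finite dimension n over a division ring R and let 1 < k < n−1. If two distinct maximal cliques of the Grassmann graph Γ_k(V) have more than one common vertex, then their intersection is a line [S,U]_k for some subspaces S ⊂ U of V with dim S = k−1 and dim U = k+1, and one of the two maximal cliques is the star [S⟩_k while the other is the top ⟨U]_k. -/
open Module

/-! Two distinct adjacent vertices `X`, `Y` determine `S = X ⊓ Y` and `U = X ⊔ Y` of dimensions
`k - 1` and `k + 1`. A vertex adjacent to both `X` and `Y` either contains `S` or lies in `U`, and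
a vertex of the star `[S⟩_k` outside the top `⟨U]_k` is never adjacent to a vertex of the top
outside the star (their intersection would be `S`). So a maximal clique through `X` and `Y` is
contained in, hence equal to, the star or the top; two distinct ones are one of each, and meet in
the line `[S,U]_k`. -/

namespace Submodule

variable {R V : Type*} [DivisionRing R] [AddCommGroup V] [Module R V] [FiniteDimensional R V]

theorem finrank_inf_lt_of_finrank_eq_of_ne {A B : Submodule R V} (h : finrank R A = finrank R B)
    (hne : A ≠ B) : finrank R ↥(A ⊓ B) < finrank R A :=
  finrank_lt_finrank_of_lt <| inf_le_left.lt_of_ne fun hAB =>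
    hne <| eq_of_le_of_finrank_eq (hAB ▸ inf_le_right) h

theorem finrank_lt_finrank_sup_of_finrank_eq_of_ne {A B : Submodule R V}
    (h : finrank R A = finrank R B) (hne : A ≠ B) : finrank R A < finrank R ↥(A ⊔ B) :=
  finrank_lt_finrank_of_lt <| le_sup_left.lt_of_ne fun hAB =>
    hne (eq_of_le_of_finrank_eq (hAB ▸ le_sup_right) h.symm).symm

theorem inf_eq_of_not_le_of_finrank_eq {S U Z : Submodule R V} {k : ℕ}
    (hS : finrank R S = k - 1) (hU : finrank R U = k + 1) (hZ : finrank R Z = k)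
    (hSU : S ≤ U) (hSZ : S ≤ Z) (hZU : ¬ Z ≤ U) : Z ⊓ U = S := by
  have hlt : finrank R U < finrank R ↥(Z ⊔ U) :=
    finrank_lt_finrank_of_lt <| le_sup_right.lt_of_ne fun h => hZU (le_sup_left.trans h.ge)
  have hdim := finrank_sup_add_finrank_inf_eq Z U
  exact (eq_of_le_of_finrank_le (le_inf hSZ hSU) (by omega)).symm

end Submodule

namespace grassmannGraph

variable {R V : Type*} [DivisionRing R] [AddCommGroup V] [Module R V] {k : ℕ}

def star (k : ℕ) (S : Submodule R V) : Set {W : Submodule R V // finrank R W = k} :=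
  {X | S ≤ X.1}

def top (k : ℕ) (U : Submodule R V) : Set {W : Submodule R V // finrank R W = k} :=
  {X | X.1 ≤ U}

theorem mem_star {S : Submodule R V} {X : {W : Submodule R V // finrank R W = k}} :
    X ∈ star k S ↔ S ≤ X.1 :=
  Iff.rfl

variable [FiniteDimensional R V] {X Y Z : {W : Submodule R V // finrank R W = k}}

theorem finrank_inf_lt (hne : X ≠ Y) : finrank R ↥(X.1 ⊓ Y.1) < k := by
  simpa only [X.2] using Submodule.finrank_inf_lt_of_finrank_eq_of_ne (X.2.trans Y.2.symm)
    (Subtype.coe_injective.ne hne)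

theorem lt_finrank_sup (hne : X ≠ Y) : k < finrank R ↥(X.1 ⊔ Y.1) := by
  simpa only [X.2] using Submodule.finrank_lt_finrank_sup_of_finrank_eq_of_ne (X.2.trans Y.2.symm)
    (Subtype.coe_injective.ne hne)

theorem adj_iff_finrank_sup :
    (grassmannGraph R V k).Adj X Y ↔ X ≠ Y ∧ finrank R ↥(X.1 ⊔ Y.1) = k + 1 := by
  show X ≠ Y ∧ _ ↔ _
  refine and_congr_right fun hne => ?_
  have hinf := finrank_inf_lt hne
  have hdim := Submodule.finrank_sup_add_finrank_inf_eq X.1 Y.1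
  rw [X.2, Y.2] at hdim
  omega

theorem isClique_star {S : Submodule R V} (hS : finrank R S = k - 1) :
    (grassmannGraph R V k).IsClique (star k S) := by
  intro X hX Y hY hne
  have hle : k - 1 ≤ finrank R ↥(X.1 ⊓ Y.1) := hS ▸ Submodule.finrank_mono (le_inf hX hY)
  have hlt := finrank_inf_lt hne
  exact ⟨hne, by omega⟩

theorem isClique_top {U : Submodule R V} (hU : finrank R U = k + 1) :
    (grassmannGraph R V k).IsClique (top k U) := by
  intro X hX Y hY hne
  have hle : finrank R ↥(X.1 ⊔ Y.1) ≤ k + 1 := hU ▸ Submodule.finrank_mono (sup_le hX hY)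
  have hlt := lt_finrank_sup hne
  exact adj_iff_finrank_sup.2 ⟨hne, by omega⟩

theorem inf_le_or_le_sup_of_adj_of_adj (hXY : X ≠ Y) (hZX : (grassmannGraph R V k).Adj Z X)
    (hZY : (grassmannGraph R V k).Adj Z Y) : X.1 ⊓ Y.1 ≤ Z.1 ∨ Z.1 ≤ X.1 ⊔ Y.1 := by
  have hZX' : finrank R ↥(Z.1 ⊓ X.1) = k - 1 := hZX.2
  by_cases h : Z.1 ⊓ X.1 = Z.1 ⊓ Y.1
  · left
    have hle : Z.1 ⊓ X.1 ≤ X.1 ⊓ Y.1 := le_inf inf_le_right (h ▸ inf_le_right)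
    have hlt := finrank_inf_lt hXY
    have heq : Z.1 ⊓ X.1 = X.1 ⊓ Y.1 := Submodule.eq_of_le_of_finrank_le hle (by omega)
    exact heq ▸ inf_le_left
  · right
    -- `Z ⊓ X` and `Z ⊓ Y` are distinct hyperplanes of `Z`, so they span `Z`.
    have hlt := Submodule.finrank_lt_finrank_sup_of_finrank_eq_of_ne (hZX.2.trans hZY.2.symm) h
    have hspan : Z.1 ⊓ X.1 ⊔ Z.1 ⊓ Y.1 = Z.1 :=
      Submodule.eq_of_le_of_finrank_le (sup_le inf_le_left inf_le_left) (by rw [Z.2]; omega)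
    exact hspan ▸ sup_le_sup inf_le_right inf_le_right

theorem not_adj_of_mem_star_diff_top_of_mem_top_diff_star {S U : Submodule R V}
    (hS : finrank R S = k - 1) (hU : finrank R U = k + 1) (hSU : S ≤ U)
    (hX : X ∈ star k S \ top k U) (hY : Y ∈ top k U \ star k S) :
    ¬ (grassmannGraph R V k).Adj X Y := by
  intro hadj
  have hXU := Submodule.inf_eq_of_not_le_of_finrank_eq hS hU X.2 hSU hX.1 hX.2
  have hle : X.1 ⊓ Y.1 ≤ S := hXU ▸ inf_le_inf_left _ hY.1
  have heq : X.1 ⊓ Y.1 = S := Submodule.eq_of_le_of_finrank_le hle (by rw [hS, hadj.2])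
  exact hY.2 (mem_star.2 (heq ▸ inf_le_right))

end grassmannGraph

open grassmannGraph in
theorem IsMaxClique.eq_star_or_eq_top {R V : Type*} [DivisionRing R] [AddCommGroup V]
    [Module R V] [FiniteDimensional R V] {k : ℕ} {X Y : {W : Submodule R V // finrank R W = k}}
    {C : Set {W : Submodule R V // finrank R W = k}} (hC : IsMaxClique (grassmannGraph R V k) C)
    (hX : X ∈ C) (hY : Y ∈ C) (hXY : X ≠ Y) :
    C = star k (X.1 ⊓ Y.1) ∨ C = top k (X.1 ⊔ Y.1) := by
  have hadj := hC.1 hX hY hXY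
  have hS : finrank R ↥(X.1 ⊓ Y.1) = k - 1 := hadj.2
  have hU := (adj_iff_finrank_sup.1 hadj).2
  have hcover : C ⊆ star k (X.1 ⊓ Y.1) ∪ top k (X.1 ⊔ Y.1) := by
    intro Z hZ
    rcases eq_or_ne Z X with rfl | hZX
    · exact Or.inl (mem_star.2 inf_le_left)
    rcases eq_or_ne Z Y with rfl | hZY
    · exact Or.inl (mem_star.2 inf_le_right)
    exact inf_le_or_le_sup_of_adj_of_adj hXY (hC.1 hZ hX hZX) (hC.1 hZ hY hZY)
  by_cases hstar : C ⊆ star k (X.1 ⊓ Y.1)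
  · exact Or.inl (hC.2 _ (isClique_star hS) hstar)
  obtain ⟨Z', hZ'C, hZ'S⟩ := Set.not_subset.1 hstar
  have hZ'U := (hcover hZ'C).resolve_left hZ'S
  refine Or.inr (hC.2 _ (isClique_top hU) fun Z hZ => by_contra fun hZU => ?_)
  have hZS := (hcover hZ).resolve_right hZU
  have hZZ' : Z ≠ Z' := by rintro rfl; exact hZU hZ'U
  exact not_adj_of_mem_star_diff_top_of_mem_top_diff_star hS hU
    (inf_le_left.trans le_sup_left) ⟨hZS, hZU⟩ ⟨hZ'U, hZ'S⟩ (hC.1 hZ hZ'C hZZ')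

theorem grassmann_maximal_cliques_intersection_general
    (R V : Type*) [DivisionRing R] [AddCommGroup V] [Module R V] [FiniteDimensional R V]
    (k : ℕ)
    (C₁ C₂ : Set {W : Submodule R V // Module.finrank R W = k})
    (hC₁ : IsMaxClique (grassmannGraph R V k) C₁)
    (hC₂ : IsMaxClique (grassmannGraph R V k) C₂)
    (hne : C₁ ≠ C₂) (hbig : (C₁ ∩ C₂).Nontrivial) :
    ∃ S U : Submodule R V, S < U ∧
      Module.finrank R S = k - 1 ∧ Module.finrank R U = k + 1 ∧
      C₁ ∩ C₂ = {X | S ≤ X.1 ∧ X.1 ≤ U} ∧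
      ((C₁ = {X | S ≤ X.1} ∧ C₂ = {X | X.1 ≤ U}) ∨
       (C₁ = {X | X.1 ≤ U} ∧ C₂ = {X | S ≤ X.1})) := by
  obtain ⟨X, hX, Y, hY, hXY⟩ := hbig
  have hadj := hC₁.1 hX.1 hY.1 hXY
  have hS : finrank R ↥(X.1 ⊓ Y.1) = k - 1 := hadj.2
  have hU := (grassmannGraph.adj_iff_finrank_sup.1 hadj).2
  have hSU : X.1 ⊓ Y.1 < X.1 ⊔ Y.1 :=
    (inf_le_left.trans le_sup_left).lt_of_ne fun h => by rw [h, hU] at hS; omega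
  refine ⟨_, _, hSU, hS, hU, ?_⟩
  rcases hC₁.eq_star_or_eq_top hX.1 hY.1 hXY with rfl | rfl <;>
    rcases hC₂.eq_star_or_eq_top hX.2 hY.2 hXY with rfl | rfl
  · exact absurd rfl hne
  · exact ⟨rfl, Or.inl ⟨rfl, rfl⟩⟩
  · exact ⟨Set.inter_comm _ _, Or.inr ⟨rfl, rfl⟩⟩
  · exact absurd rfl hne

/-- If two distinct maximal cliques of `Γ_k(V)` (with `1 < k < n-1`) have
more than one common vertex, then their intersection is a line `[S,U]_k` with
`dim S = k-1`, `dim U = k+1`, `S ⊂ U`, and one of the cliques is the star `[S⟩_k`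
while the other is the top `⟨U]_k`. -/
theorem grassmann_maximal_cliques_intersection
    (R V : Type*) [DivisionRing R] [AddCommGroup V] [Module R V] [FiniteDimensional R V]
    (n k : ℕ) (hn : Module.finrank R V = n) (hk1 : 1 < k) (hk2 : k < n - 1)
    (C₁ C₂ : Set {W : Submodule R V // Module.finrank R W = k})
    (hC₁ : IsMaxClique (grassmannGraph R V k) C₁)
    (hC₂ : IsMaxClique (grassmannGraph R V k) C₂)
    (hne : C₁ ≠ C₂) (hbig : (C₁ ∩ C₂).Nontrivial) :
    ∃ S U : Submodule R V, S < U ∧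
      Module.finrank R S = k - 1 ∧ Module.finrank R U = k + 1 ∧
      C₁ ∩ C₂ = {X | S ≤ X.1 ∧ X.1 ≤ U} ∧
      ((C₁ = {X | S ≤ X.1} ∧ C₂ = {X | X.1 ≤ U}) ∨
       (C₁ = {X | X.1 ≤ U} ∧ C₂ = {X | S ≤ X.1})) :=
  grassmann_maximal_cliques_intersection_general R V k C₁ C₂ hC₁ hC₂ hne hbig
end

section
/- Let V be a left vector space of finite dimension n over a division ring R and let 1 < k < n−1. For any two distinct maximal cliques 𝒳, 𝒴 of the Grassmann graph Γ_k(V) there is a finite sequence of maximal cliques 𝒳 = 𝒳₀, 𝒳₁, …, 𝒳ᵢ = 𝒴 of Γ_k(V) such that for every j ∈ {1,…,i} the intersection 𝒳_{j−1} ∩ 𝒳_j is a line [S,U]_k for some subspaces S ⊂ U with dim S = k−1 and dim U = k+1. -/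
open Module

/-!
Every maximal clique of `Γ_k(V)` is a star `{X | S ≤ X}` with `dim S = k - 1` or a top
`{X | X ≤ U}` with `dim U = k + 1`: once a clique contains two vertices `X ≠ Y`, each further
member contains `X ⊓ Y` or lies in `X ⊔ Y`, and a member not containing `X ⊓ Y` rules out
members outside `X ⊔ Y`.
A star and a top with `S < U` meet exactly in the line `[S,U]_k`, so it suffices to join any two
stars through tops. Stars of `S, T` lying in a common `(k+1)`-space `U` are joined through the top
of `U`; exchanging a vector of `S` outside `S ⊓ T` for a vector of `T \ S` is such a step, and it
raises `dim (S ⊓ T)` by one.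
-/

namespace Submodule

variable {R V : Type*} [DivisionRing R] [AddCommGroup V] [Module R V] [FiniteDimensional R V]

theorem finrank_inf_lt_of_ne {X Y : Submodule R V} (hXY : X ≠ Y)
    (h : finrank R X = finrank R Y) : finrank R ↥(X ⊓ Y) < finrank R X :=
  finrank_lt_finrank_of_lt <| inf_lt_left.2 fun hle => hXY (eq_of_le_of_finrank_eq hle h)

theorem exists_le_le_finrank_eq_s5 {A B : Submodule R V} (hAB : A ≤ B) {m : ℕ}
    (hAm : finrank R A ≤ m) (hmB : m ≤ finrank R B) :
    ∃ W : Submodule R V, A ≤ W ∧ W ≤ B ∧ finrank R W = m := by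
  induction m with
  | zero => exact ⟨A, le_rfl, hAB, by omega⟩
  | succ m ih =>
    rcases hAm.eq_or_lt with hA | hA
    · exact ⟨A, le_rfl, hAB, hA⟩
    obtain ⟨W, hAW, hWB, hW⟩ := ih (by omega) (by omega)
    obtain ⟨v, hvB, hvW⟩ := SetLike.exists_of_lt <| lt_of_le_of_ne hWB fun h => by
      rw [h] at hW; omega
    exact ⟨W ⊔ span R {v}, le_sup_of_le_left hAW,
      sup_le hWB ((span_singleton_le_iff_mem _ _).2 hvB),
      by rw [finrank_sup_span_singleton hvW, hW]⟩

theorem exists_le_finrank_add_one_eq_notMem {U : Submodule R V} {t : V} (htU : t ∈ U)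
    (ht : t ≠ 0) : ∃ Y ≤ U, finrank R Y + 1 = finrank R U ∧ t ∉ Y := by
  obtain ⟨Q, hQ⟩ := (span R {t}).exists_isCompl
  have hQU : Q ⊔ U = ⊤ := by
    rw [eq_top_iff, ← hQ.sup_eq_top]
    exact sup_le (le_sup_of_le_right ((span_singleton_le_iff_mem _ _).2 htU)) le_sup_left
  refine ⟨Q ⊓ U, inf_le_right, ?_, fun htQ => ?_⟩
  · have hdim := finrank_sup_add_finrank_inf_eq Q U
    have hcompl := finrank_add_eq_of_isCompl hQ
    rw [hQU, finrank_top] at hdim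
    rw [finrank_span_singleton ht] at hcompl
    omega
  · exact (disjoint_span_singleton' ht).1 hQ.disjoint.symm (mem_inf.1 htQ).1

end Submodule

open Submodule

abbrev GrassmannVertex (R V : Type*) [DivisionRing R] [AddCommGroup V] [Module R V] (k : ℕ) :=
  {W : Submodule R V // finrank R W = k}

section Cliques

variable {R V : Type*} [DivisionRing R] [AddCommGroup V] [Module R V] [FiniteDimensional R V]
  {k : ℕ}

variable (k) in
def grassmannStar (S : Submodule R V) : Set (GrassmannVertex R V k) :=
  {X | S ≤ X.1}

variable (k) in
def grassmannTop (U : Submodule R V) : Set (GrassmannVertex R V k) :=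
  {X | X.1 ≤ U}

theorem finrank_sup_of_grassmannGraph_adj (hk : 1 ≤ k) {X Y : GrassmannVertex R V k}
    (hXY : (grassmannGraph R V k).Adj X Y) : finrank R ↥(X.1 ⊔ Y.1) = k + 1 := by
  have h := finrank_sup_add_finrank_inf_eq X.1 Y.1
  rw [X.2, Y.2, hXY.2] at h
  omega

theorem isClique_grassmannStar {S : Submodule R V} (hS : finrank R S = k - 1) :
    (grassmannGraph R V k).IsClique (grassmannStar k S) := by
  intro X hX Y hY hXY
  have hlt := finrank_inf_lt_of_ne (Subtype.coe_injective.ne hXY) (X.2.trans Y.2.symm)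
  have hle := finrank_mono (le_inf (show S ≤ X.1 from hX) hY)
  rw [X.2] at hlt
  exact ⟨hXY, by omega⟩

theorem isClique_grassmannTop {U : Submodule R V} (hU : finrank R U = k + 1) :
    (grassmannGraph R V k).IsClique (grassmannTop k U) := by
  intro X hX Y hY hXY
  have hlt := finrank_inf_lt_of_ne (Subtype.coe_injective.ne hXY) (X.2.trans Y.2.symm)
  have hle := finrank_mono (sup_le (show X.1 ≤ U from hX) hY)
  have hdim := finrank_sup_add_finrank_inf_eq X.1 Y.1
  rw [X.2] at hlt
  rw [X.2, Y.2] at hdim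
  exact ⟨hXY, by omega⟩

theorem isMaxClique_grassmannStar (hk : 1 ≤ k) (hkn : k + 1 < finrank R V)
    {S : Submodule R V} (hS : finrank R S = k - 1) :
    IsMaxClique (grassmannGraph R V k) (grassmannStar k S) := by
  refine ⟨isClique_grassmannStar hS, fun D hD hSD => hSD.antisymm fun X hXD => ?_⟩
  by_contra hSX
  change ¬S ≤ X.1 at hSX
  obtain ⟨Y₀, hSY₀, -, hY₀⟩ :=
    exists_le_le_finrank_eq_s5 (le_top : S ≤ ⊤) (m := k) (by omega) (by rw [finrank_top]; omega)
  have hadj₀ := hD hXD (hSD (show ⟨Y₀, hY₀⟩ ∈ grassmannStar k S from hSY₀))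
    fun h => hSX (by rw [h]; exact hSY₀)
  have hSXY₀ : S ⊔ X.1 ≤ X.1 ⊔ Y₀ := sup_le (hSY₀.trans le_sup_right) le_sup_left
  obtain ⟨v, -, hv⟩ := SetLike.exists_of_lt <| lt_top_of_finrank_lt_finrank <|
    (finrank_mono hSXY₀).trans_lt (by rw [finrank_sup_of_grassmannGraph_adj hk hadj₀]; omega)
  have hvS : v ∉ S := fun h => hv (mem_sup_left h)
  let Y : GrassmannVertex R V k :=
    ⟨S ⊔ span R {v}, by rw [finrank_sup_span_singleton hvS, hS]; omega⟩
  have hSY : S ≤ Y.1 := le_sup_left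
  have hadj := hD hXD (hSD hSY) fun h => hv <|
    mem_sup_right (by rw [h]; exact mem_sup_right (mem_span_singleton_self v))
  have hYSX : Y.1 ⊓ (S ⊔ X.1) = S := by
    rw [sup_inf_assoc_of_le _ le_sup_left, inf_comm,
      (disjoint_span_singleton_of_notMem hv).eq_bot, sup_bot_eq]
  have hXY : X.1 ⊓ Y.1 ≤ S ⊓ X.1 :=
    le_inf (hYSX ▸ le_inf inf_le_right (inf_le_left.trans le_sup_right)) inf_le_left
  have hlt := finrank_lt_finrank_of_lt (inf_lt_left.2 hSX)
  have hle := finrank_mono hXY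
  rw [hadj.2] at hle
  omega

theorem isMaxClique_grassmannTop (hk : 1 < k) {U : Submodule R V} (hU : finrank R U = k + 1) :
    IsMaxClique (grassmannGraph R V k) (grassmannTop k U) := by
  refine ⟨isClique_grassmannTop hU, fun D hD hUD => hUD.antisymm fun X hXD => ?_⟩
  by_contra hXU
  change ¬X.1 ≤ U at hXU
  have hT := finrank_lt_finrank_of_lt (inf_lt_left.2 hXU)
  rw [X.2] at hT
  obtain ⟨Y₀, -, hY₀U, hY₀⟩ :=
    exists_le_le_finrank_eq_s5 (bot_le : ⊥ ≤ U) (m := k) (by simp) (by omega)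
  have hadj₀ := hD hXD (hUD (show ⟨Y₀, hY₀⟩ ∈ grassmannTop k U from hY₀U))
    fun h => hXU (by rw [h]; exact hY₀U)
  have hT' := finrank_mono (inf_le_inf_left X.1 hY₀U)
  rw [hadj₀.2] at hT'
  obtain ⟨t, htT, ht⟩ := (X.1 ⊓ U).ne_bot_iff.1 fun h => by
    rw [h, finrank_bot] at hT'; omega
  obtain ⟨Y, hYU, hY, htY⟩ := exists_le_finrank_add_one_eq_notMem (mem_inf.1 htT).2 ht
  have hadj := hD hXD (hUD (show ⟨Y, by omega⟩ ∈ grassmannTop k U from hYU))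
    fun h => hXU (by rw [h]; exact hYU)
  have hlt : X.1 ⊓ Y < X.1 ⊓ U := SetLike.lt_iff_le_and_exists.2
    ⟨inf_le_inf_left X.1 hYU, t, htT, fun h => htY (mem_inf.1 h).2⟩
  have := finrank_lt_finrank_of_lt hlt
  rw [hadj.2] at this
  omega

theorem inf_le_or_le_sup_of_isClique {C : Set (GrassmannVertex R V k)}
    (hC : (grassmannGraph R V k).IsClique C) {X Y Z : GrassmannVertex R V k}
    (hX : X ∈ C) (hY : Y ∈ C) (hZ : Z ∈ C) (hXY : X ≠ Y) :
    X.1 ⊓ Y.1 ≤ Z.1 ∨ Z.1 ≤ X.1 ⊔ Y.1 := by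
  rcases eq_or_ne Z X with rfl | hZX
  · exact .inl inf_le_left
  rcases eq_or_ne Z Y with rfl | hZY
  · exact .inl inf_le_right
  have hZXdim := (hC hZ hX hZX).2
  have hZYdim := (hC hZ hY hZY).2
  by_cases heq : Z.1 ⊓ X.1 = Z.1 ⊓ Y.1
  · left
    have hle : Z.1 ⊓ X.1 ≤ X.1 ⊓ Y.1 := le_inf inf_le_right (heq ▸ inf_le_right)
    rw [← eq_of_le_of_finrank_le hle (by rw [(hC hX hY hXY).2, hZXdim])]
    exact inf_le_left
  · right
    have hlt : Z.1 ⊓ X.1 < Z.1 ⊓ X.1 ⊔ Z.1 ⊓ Y.1 := left_lt_sup.2 fun hle =>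
      heq (eq_of_le_of_finrank_le hle (by rw [hZXdim, hZYdim])).symm
    have hZ : Z.1 ⊓ X.1 ⊔ Z.1 ⊓ Y.1 = Z.1 := by
      have := finrank_lt_finrank_of_lt hlt
      exact eq_of_le_of_finrank_le (sup_le inf_le_left inf_le_left) (by rw [Z.2]; omega)
    rw [← hZ]
    exact sup_le_sup inf_le_right inf_le_right

theorem le_of_grassmannGraph_adj {S U : Submodule R V} (hS : finrank R S = k - 1) (hSU : S ≤ U)
    {Z₁ Z₂ : GrassmannVertex R V k} (hadj : (grassmannGraph R V k).Adj Z₁ Z₂)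
    (hZ₁U : Z₁.1 ≤ U) (hSZ₂ : S ≤ Z₂.1) (hZ₂U : ¬Z₂.1 ≤ U) : S ≤ Z₁.1 := by
  have hlt := finrank_lt_finrank_of_lt (inf_lt_left.2 hZ₂U)
  rw [Z₂.2] at hlt
  have hZ₂U : S = Z₂.1 ⊓ U := eq_of_le_of_finrank_le (le_inf hSZ₂ hSU) (by omega)
  have hZ₁Z₂ : Z₁.1 ⊓ Z₂.1 = S :=
    eq_of_le_of_finrank_le (hZ₂U ▸ le_inf inf_le_right (inf_le_left.trans hZ₁U))
      (by rw [hS, hadj.2])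
  exact hZ₁Z₂ ▸ inf_le_left

theorem Set.Subsingleton.exists_subset_grassmannStar (hkn : k ≤ finrank R V)
    {C : Set (GrassmannVertex R V k)} (hC : C.Subsingleton) :
    ∃ S : Submodule R V, finrank R S = k - 1 ∧ C ⊆ grassmannStar k S := by
  rcases hC.eq_empty_or_singleton with rfl | ⟨X, rfl⟩
  · obtain ⟨S, -, -, hS⟩ := exists_le_le_finrank_eq_s5 (bot_le : ⊥ ≤ (⊤ : Submodule R V))
      (m := k - 1) (by simp) (by rw [finrank_top]; omega)
    exact ⟨S, hS, Set.empty_subset _⟩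
  · obtain ⟨S, -, hSX, hS⟩ :=
      exists_le_le_finrank_eq_s5 (bot_le : ⊥ ≤ X.1) (m := k - 1) (by simp) (by rw [X.2]; omega)
    exact ⟨S, hS, Set.singleton_subset_iff.2 hSX⟩

theorem IsMaxClique.eq_grassmannStar_or_eq_grassmannTop (hk : 1 ≤ k) (hkn : k ≤ finrank R V)
    {C : Set (GrassmannVertex R V k)} (hC : IsMaxClique (grassmannGraph R V k) C) :
    (∃ S : Submodule R V, finrank R S = k - 1 ∧ C = grassmannStar k S) ∨
      ∃ U : Submodule R V, finrank R U = k + 1 ∧ C = grassmannTop k U := by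
  rcases C.subsingleton_or_nontrivial with hsub | ⟨X, hX, Y, hY, hXY⟩
  · obtain ⟨S, hS, hCS⟩ := hsub.exists_subset_grassmannStar hkn
    exact .inl ⟨S, hS, hC.2 _ (isClique_grassmannStar hS) hCS⟩
  have hadj := hC.1 hX hY hXY
  by_cases hstar : ∀ Z ∈ C, X.1 ⊓ Y.1 ≤ Z.1
  · exact .inl ⟨_, hadj.2, hC.2 _ (isClique_grassmannStar hadj.2) hstar⟩
  by_cases htop : ∀ Z ∈ C, Z.1 ≤ X.1 ⊔ Y.1
  · have hU := finrank_sup_of_grassmannGraph_adj hk hadj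
    exact .inr ⟨_, hU, hC.2 _ (isClique_grassmannTop hU) htop⟩
  push Not at hstar htop
  obtain ⟨Z₁, hZ₁, hSZ₁⟩ := hstar
  obtain ⟨Z₂, hZ₂, hZ₂U⟩ := htop
  have hZ₁U := (inf_le_or_le_sup_of_isClique hC.1 hX hY hZ₁ hXY).resolve_left hSZ₁
  have hSZ₂ := (inf_le_or_le_sup_of_isClique hC.1 hX hY hZ₂ hXY).resolve_right hZ₂U
  exact absurd (le_of_grassmannGraph_adj hadj.2 (inf_le_left.trans le_sup_left)
    (hC.1 hZ₁ hZ₂ fun h => hSZ₁ (h ▸ hSZ₂)) hZ₁U hSZ₂ hZ₂U) hSZ₁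

end Cliques

section Connectivity

variable {R V : Type*} [DivisionRing R] [AddCommGroup V] [Module R V] {k : ℕ}

variable (k) in
def IsGrassmannLine (L : Set (GrassmannVertex R V k)) : Prop :=
  ∃ S U : Submodule R V, S < U ∧ finrank R S = k - 1 ∧ finrank R U = k + 1 ∧
    L = {X | S ≤ X.1 ∧ X.1 ≤ U}

/-- Walks in this graph are the chains of maximal cliques of the theorem (`fromRel` only adds the
symmetric pairs and removes loops). -/
def maxCliqueGraph (R V : Type*) [DivisionRing R] [AddCommGroup V] [Module R V] (k : ℕ) :
    SimpleGraph (Set (GrassmannVertex R V k)) :=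
  SimpleGraph.fromRel fun A B => IsMaxClique (grassmannGraph R V k) A ∧
    IsMaxClique (grassmannGraph R V k) B ∧ IsGrassmannLine k (A ∩ B)

namespace maxCliqueGraph

theorem isMaxClique_isMaxClique_isGrassmannLine_of_adj {A B : Set (GrassmannVertex R V k)}
    (h : (maxCliqueGraph R V k).Adj A B) :
    IsMaxClique (grassmannGraph R V k) A ∧ IsMaxClique (grassmannGraph R V k) B ∧
      IsGrassmannLine k (A ∩ B) := by
  rcases h.2 with h | ⟨hB, hA, hBA⟩
  · exact h
  · exact ⟨hA, hB, Set.inter_comm A B ▸ hBA⟩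

theorem reachable_of_isGrassmannLine {A B : Set (GrassmannVertex R V k)}
    (hA : IsMaxClique (grassmannGraph R V k) A) (hB : IsMaxClique (grassmannGraph R V k) B)
    (hAB : IsGrassmannLine k (A ∩ B)) : (maxCliqueGraph R V k).Reachable A B := by
  rcases eq_or_ne A B with rfl | hne
  · rfl
  · exact SimpleGraph.Adj.reachable ⟨hne, .inl ⟨hA, hB, hAB⟩⟩

variable [FiniteDimensional R V]

theorem reachable_grassmannStar_grassmannTop (hk : 1 < k) (hkn : k + 1 < finrank R V)
    {S U : Submodule R V} (hS : finrank R S = k - 1) (hU : finrank R U = k + 1) (hSU : S ≤ U) :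
    (maxCliqueGraph R V k).Reachable (grassmannStar k S) (grassmannTop k U) :=
  reachable_of_isGrassmannLine (isMaxClique_grassmannStar hk.le hkn hS)
    (isMaxClique_grassmannTop hk hU)
    ⟨S, U, lt_of_le_of_ne hSU fun h => by rw [h] at hS; omega, hS, hU, rfl⟩

theorem reachable_grassmannStar_of_le (hk : 1 < k) (hkn : k + 1 < finrank R V)
    {S T U : Submodule R V} (hS : finrank R S = k - 1) (hT : finrank R T = k - 1)
    (hU : finrank R U = k + 1) (hSU : S ≤ U) (hTU : T ≤ U) :
    (maxCliqueGraph R V k).Reachable (grassmannStar k S) (grassmannStar k T) :=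
  (reachable_grassmannStar_grassmannTop hk hkn hS hU hSU).trans
    (reachable_grassmannStar_grassmannTop hk hkn hT hU hTU).symm

theorem reachable_grassmannStar (hk : 1 < k) (hkn : k + 1 < finrank R V)
    {S T : Submodule R V} (hS : finrank R S = k - 1) (hT : finrank R T = k - 1) :
    (maxCliqueGraph R V k).Reachable (grassmannStar k S) (grassmannStar k T) := by
  obtain ⟨d, hd⟩ : ∃ d, k - 1 ≤ finrank R ↥(S ⊓ T) + d := ⟨k - 1, by omega⟩
  induction d generalizing S with
  | zero =>
    have hST : S ≤ T := by
      rw [← eq_of_le_of_finrank_le (inf_le_left : S ⊓ T ≤ S) (by omega)]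
      exact inf_le_right
    rw [eq_of_le_of_finrank_eq hST (hS.trans hT.symm)]
  | succ d ih =>
    rcases eq_or_ne S T with rfl | hST
    · rfl
    obtain ⟨v, hvT, hvS⟩ := SetLike.not_le_iff_exists.1 fun hTS : T ≤ S =>
      hST (eq_of_le_of_finrank_eq hTS (hT.trans hS.symm)).symm
    have hSTlt := finrank_inf_lt_of_ne hST (hS.trans hT.symm)
    obtain ⟨H, hSTH, hHS, hH⟩ :=
      exists_le_le_finrank_eq_s5 (inf_le_left : S ⊓ T ≤ S) (m := k - 2) (by omega) (by omega)
    have hS' : finrank R ↥(H ⊔ span R {v}) = k - 1 := by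
      rw [finrank_sup_span_singleton fun h => hvS (hHS h), hH]; omega
    obtain ⟨U, hSvU, -, hU⟩ :=
      exists_le_le_finrank_eq_s5 (le_top : S ⊔ span R {v} ≤ ⊤) (m := k + 1)
        (by rw [finrank_sup_span_singleton hvS, hS]; omega) (by rw [finrank_top]; omega)
    refine (reachable_grassmannStar_of_le hk hkn hS hS' hU (le_sup_left.trans hSvU)
      ((sup_le_sup_right hHS _).trans hSvU)).trans (ih hS' ?_)
    have hgrow : S ⊓ T ⊔ span R {v} ≤ (H ⊔ span R {v}) ⊓ T :=
      le_inf (sup_le_sup_right hSTH _)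
        (sup_le inf_le_right ((span_singleton_le_iff_mem _ _).2 hvT))
    have := finrank_mono hgrow
    rw [finrank_sup_span_singleton fun h => hvS (mem_inf.1 h).1] at this
    omega

theorem exists_reachable_grassmannStar (hk : 1 < k) (hkn : k + 1 < finrank R V)
    {C : Set (GrassmannVertex R V k)} (hC : IsMaxClique (grassmannGraph R V k) C) :
    ∃ S : Submodule R V, finrank R S = k - 1 ∧
      (maxCliqueGraph R V k).Reachable (grassmannStar k S) C := by
  rcases hC.eq_grassmannStar_or_eq_grassmannTop hk.le (by omega) with
    ⟨S, hS, rfl⟩ | ⟨U, hU, rfl⟩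
  · exact ⟨S, hS, .rfl⟩
  · obtain ⟨S, -, hSU, hS⟩ :=
      exists_le_le_finrank_eq_s5 (bot_le : ⊥ ≤ U) (m := k - 1) (by simp) (by omega)
    exact ⟨S, hS, reachable_grassmannStar_grassmannTop hk hkn hS hU hSU⟩

theorem reachable (hk : 1 < k) (hkn : k + 1 < finrank R V) {A B : Set (GrassmannVertex R V k)}
    (hA : IsMaxClique (grassmannGraph R V k) A) (hB : IsMaxClique (grassmannGraph R V k) B) :
    (maxCliqueGraph R V k).Reachable A B := by
  obtain ⟨S, hS, hSA⟩ := exists_reachable_grassmannStar hk hkn hA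
  obtain ⟨T, hT, hTB⟩ := exists_reachable_grassmannStar hk hkn hB
  exact hSA.symm.trans ((reachable_grassmannStar hk hkn hS hT).trans hTB)

end maxCliqueGraph

end Connectivity

theorem grassmann_maximal_cliques_chain_general
    (R V : Type*) [DivisionRing R] [AddCommGroup V] [Module R V] [FiniteDimensional R V]
    (n k : ℕ) (hn : Module.finrank R V = n) (hk1 : 1 < k) (hk2 : k < n - 1)
    (𝒳 𝒴 : Set {W : Submodule R V // Module.finrank R W = k})
    (h𝒳 : IsMaxClique (grassmannGraph R V k) 𝒳)
    (h𝒴 : IsMaxClique (grassmannGraph R V k) 𝒴) :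
    ∃ (i : ℕ) (c : ℕ → Set {W : Submodule R V // Module.finrank R W = k}),
      c 0 = 𝒳 ∧ c i = 𝒴 ∧
      (∀ j ≤ i, IsMaxClique (grassmannGraph R V k) (c j)) ∧
      ∀ j, 1 ≤ j → j ≤ i →
        ∃ S U : Submodule R V, S < U ∧
          Module.finrank R S = k - 1 ∧ Module.finrank R U = k + 1 ∧
          c (j - 1) ∩ c j = {X | S ≤ X.1 ∧ X.1 ≤ U} := by
  obtain ⟨p⟩ := maxCliqueGraph.reachable hk1 (by omega) h𝒳 h𝒴
  have hstep {j : ℕ} (hj : j < p.length) :=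
    maxCliqueGraph.isMaxClique_isMaxClique_isGrassmannLine_of_adj (p.adj_getVert_succ hj)
  refine ⟨p.length, p.getVert, p.getVert_zero, p.getVert_length, fun j hj => ?_,
    fun j hj₁ hj₂ => ?_⟩
  · rcases hj.lt_or_eq with hj | rfl
    · exact (hstep hj).1
    · rwa [p.getVert_length]
  · obtain ⟨S, U, hSU, hS, hU, hL⟩ := (hstep (show j - 1 < p.length by omega)).2.2
    rw [Nat.sub_add_cancel hj₁] at hL
    exact ⟨S, U, hSU, hS, hU, hL⟩

/-- Any two distinct maximal cliques of `Γ_k(V)` (with `1 < k < n-1`) are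
connected by a finite sequence of maximal cliques in which the intersection of any two
consecutive ones is a line `[S,U]_k`. -/
theorem grassmann_maximal_cliques_chain
    (R V : Type*) [DivisionRing R] [AddCommGroup V] [Module R V] [FiniteDimensional R V]
    (n k : ℕ) (hn : Module.finrank R V = n) (hk1 : 1 < k) (hk2 : k < n - 1)
    (𝒳 𝒴 : Set {W : Submodule R V // Module.finrank R W = k})
    (h𝒳 : IsMaxClique (grassmannGraph R V k) 𝒳)
    (h𝒴 : IsMaxClique (grassmannGraph R V k) 𝒴)
    (hne : 𝒳 ≠ 𝒴) :
    ∃ (i : ℕ) (c : ℕ → Set {W : Submodule R V // Module.finrank R W = k}),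
      c 0 = 𝒳 ∧ c i = 𝒴 ∧
      (∀ j ≤ i, IsMaxClique (grassmannGraph R V k) (c j)) ∧
      ∀ j, 1 ≤ j → j ≤ i →
        ∃ S U : Submodule R V, S < U ∧
          Module.finrank R S = k - 1 ∧ Module.finrank R U = k + 1 ∧
          c (j - 1) ∩ c j = {X | S ≤ X.1 ∧ X.1 ≤ U} :=
  grassmann_maximal_cliques_chain_general R V n k hn hk1 hk2 𝒳 𝒴 h𝒳 h𝒴
end

section
/- Let V and V' be left vector spaces of finite dimensions n and n' over division rings R and R', let k ∈ {2,…,n−2} and k' ∈ {2,…,n'−2}. For every embedding f of the Grassmann graph Γ_k(V) in the Grassmann graph Γ_{k'}(V'), exactly one of the following holds: (A) the image under f of every star of Γ_k(V) is contained in a star of Γ_{k'}(V') and the image of every top is contained in a top; or (B) the image under f of every star is contained in a top and the image of every top is contained in a star. -/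
open Module

/-!
Every clique of a Grassmann graph lies in a star or in a top, so `f` maps each star and each top
into a star or a top. Let `S ≤ U` have dimensions `k - 1` and `k + 1`. If both `[S⟩` and `⟨U]`
went into stars, these stars would coincide, both being `f A ∩ f B` for two distinct vertices
`A, B` between `S` and `U`; but `[S⟩ ∪ ⟨U]` contains two non-adjacent vertices, whose images
would be adjacent. Dually for tops. Hence `[S⟩` goes into a star exactly when `⟨U]` goes into a
top. Since any two stars are joined by a chain of stars in which consecutive ones lie in a common
top, one star decides the behaviour of all stars and all tops.
-/

open Submodule

namespace Submodule

variable {K M : Type*} [DivisionRing K] [AddCommGroup M] [Module K M] [FiniteDimensional K M]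
  {m : ℕ}

theorem exists_le_le_finrank_eq_s7 {A B : Submodule K M} (hAB : A ≤ B) (hA : finrank K A ≤ m)
    (hB : m ≤ finrank K B) : ∃ C, A ≤ C ∧ C ≤ B ∧ finrank K C = m := by
  induction m, hA using Nat.le_induction with
  | base => exact ⟨A, le_rfl, hAB, rfl⟩
  | succ m _ ih =>
    obtain ⟨C, hAC, hCB, rfl⟩ := ih (by omega)
    obtain ⟨x, hxB, hxC⟩ := SetLike.exists_of_lt (lt_of_le_of_finrank_lt_finrank hCB (by omega))
    exact ⟨C ⊔ span K {x}, le_sup_of_le_left hAC,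
      sup_le hCB ((span_singleton_le_iff_mem x B).2 hxB), finrank_sup_span_singleton hxC⟩

theorem finrank_inf_lt_of_ne_s7 {X Y : Submodule K M} (hX : finrank K X = m)
    (hY : finrank K Y = m) (hXY : X ≠ Y) : finrank K ↥(X ⊓ Y) < m :=
  hX ▸ finrank_lt_finrank_of_lt
    (inf_lt_left.2 fun h => hXY (eq_of_le_of_finrank_eq h (hX.trans hY.symm)))

theorem sub_one_le_finrank_inf_of_sup_le {X Y U : Submodule K M} (hX : finrank K X = m)
    (hY : finrank K Y = m) (hU : finrank K U = m + 1) (h : X ⊔ Y ≤ U) :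
    m - 1 ≤ finrank K ↥(X ⊓ Y) := by
  have := finrank_sup_add_finrank_inf_eq X Y
  have := finrank_mono h
  omega

theorem eq_inf_of_le_inf {S X Y : Submodule K M} (hS : finrank K S = m - 1)
    (hX : finrank K X = m) (hY : finrank K Y = m) (hXY : X ≠ Y) (h : S ≤ X ⊓ Y) :
    S = X ⊓ Y :=
  eq_of_le_of_finrank_le h (by have := finrank_inf_lt_of_ne_s7 hX hY hXY; omega)

theorem sup_eq_of_sup_le {U X Y : Submodule K M} (hU : finrank K U = m + 1)
    (hX : finrank K X = m) (hY : finrank K Y = m) (hXY : X ≠ Y) (h : X ⊔ Y ≤ U) :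
    X ⊔ Y = U :=
  eq_of_le_of_finrank_le h (by
    have := finrank_inf_lt_of_ne_s7 hX hY hXY
    have := finrank_sup_add_finrank_inf_eq X Y
    omega)

theorem inf_le_or_le_sup {X Y Z : Submodule K M} (hX : finrank K X = m)
    (hY : finrank K Y = m) (hZ : finrank K Z = m) (hXY : X ≠ Y)
    (hZX : m - 1 ≤ finrank K ↥(Z ⊓ X)) (hZY : m - 1 ≤ finrank K ↥(Z ⊓ Y)) :
    X ⊓ Y ≤ Z ∨ Z ≤ X ⊔ Y := by
  refine or_iff_not_imp_left.2 fun hXYZ => ?_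
  -- `Z ⊓ X` and `Z ⊓ Y` are then too large for their intersection `Z ⊓ (X ⊓ Y)`: they span `Z`.
  have := finrank_lt_finrank_of_lt (inf_lt_right.2 hXYZ)
  have := finrank_inf_lt_of_ne_s7 hX hY hXY
  have := finrank_sup_add_finrank_inf_eq (Z ⊓ X) (Z ⊓ Y)
  rw [← inf_inf_distrib_left] at this
  have hsup : Z ⊓ X ⊔ Z ⊓ Y = Z :=
    eq_of_le_of_finrank_le (sup_le inf_le_left inf_le_left) (by omega)
  exact hsup ▸ sup_le_sup inf_le_right inf_le_right

theorem exists_star_or_top_of_pairwise {ι : Type*} {F : ι → Submodule K M}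
    (hm : m - 1 ≤ finrank K M) (hF : ∀ i, finrank K (F i) = m)
    (hadj : ∀ i j, m - 1 ≤ finrank K ↥(F i ⊓ F j)) :
    (∃ S : Submodule K M, finrank K S = m - 1 ∧ ∀ i, S ≤ F i) ∨
      ∃ U : Submodule K M, finrank K U = m + 1 ∧ ∀ i, F i ≤ U := by
  by_cases hconst : ∀ i j, F i = F j
  · rcases isEmpty_or_nonempty ι with hι | ⟨⟨i₀⟩⟩
    · obtain ⟨S, -, -, hS⟩ := exists_le_le_finrank_eq_s7 (m := m - 1)
        (bot_le : ⊥ ≤ (⊤ : Submodule K M)) (by simp) (by rwa [finrank_top])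
      exact Or.inl ⟨S, hS, fun i => isEmptyElim i⟩
    · obtain ⟨S, -, hS, hSd⟩ := exists_le_le_finrank_eq_s7 (m := m - 1) (bot_le : ⊥ ≤ F i₀)
        (by simp) (by rw [hF]; omega)
      exact Or.inl ⟨S, hSd, fun i => hconst i₀ i ▸ hS⟩
  push Not at hconst
  obtain ⟨i, j, hij⟩ := hconst
  have hinf := finrank_inf_lt_of_ne_s7 (hF i) (hF j) hij
  have hsup : finrank K ↥(F i ⊔ F j) = m + 1 := by
    have := finrank_sup_add_finrank_inf_eq (F i) (F j)
    have := hadj i j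
    have := hF i
    have := hF j
    omega
  by_cases hstar : ∀ l, F i ⊓ F j ≤ F l
  · exact Or.inl ⟨F i ⊓ F j, by have := hadj i j; omega, hstar⟩
  push Not at hstar
  obtain ⟨l, hl⟩ := hstar
  have hlU : F l ≤ F i ⊔ F j :=
    (inf_le_or_le_sup (hF i) (hF j) (hF l) hij (hadj l i) (hadj l j)).resolve_left hl
  refine Or.inr ⟨F i ⊔ F j, hsup, fun l' =>
    (inf_le_or_le_sup (hF i) (hF j) (hF l') hij (hadj l' i) (hadj l' j)).elim (fun hl' => ?_) id⟩
  -- Otherwise `F l'` meets `F i ⊔ F j` exactly in `F i ⊓ F j`, which `F l` does not contain.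
  by_contra hl'U
  have hcap : F l' ⊓ (F i ⊔ F j) = F i ⊓ F j := by
    refine (eq_of_le_of_finrank_le (le_inf hl' (inf_le_left.trans le_sup_left)) ?_).symm
    have := finrank_lt_finrank_of_lt (inf_lt_left.2 hl'U)
    have := hadj i j
    have := hF l'
    omega
  have hle : F l ⊓ F l' ≤ F l ⊓ (F i ⊓ F j) :=
    le_inf inf_le_left (hcap ▸ le_inf inf_le_right (inf_le_left.trans hlU))
  have := finrank_mono hle
  have := finrank_lt_finrank_of_lt (inf_lt_right.2 hl)
  have := hadj l l'
  have := hadj i j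
  omega

theorem exists_ne_between {S U : Submodule K M} (hm : 1 ≤ m) (hS : finrank K S = m - 1)
    (hU : finrank K U = m + 1) (hSU : S ≤ U) :
    ∃ A B : Submodule K M, finrank K A = m ∧ finrank K B = m ∧
      S ≤ A ∧ A ≤ U ∧ S ≤ B ∧ B ≤ U ∧ A ≠ B := by
  obtain ⟨a, haU, haS⟩ := SetLike.exists_of_lt (lt_of_le_of_finrank_lt_finrank hSU (by omega))
  have hA : finrank K ↥(S ⊔ span K {a}) = m := by rw [finrank_sup_span_singleton haS]; omega
  have hAU : S ⊔ span K {a} ≤ U := sup_le hSU ((span_singleton_le_iff_mem a U).2 haU)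
  obtain ⟨b, hbU, hbA⟩ := SetLike.exists_of_lt (lt_of_le_of_finrank_lt_finrank hAU (by omega))
  have hbS : b ∉ S := fun h => hbA (mem_sup_left h)
  refine ⟨_, S ⊔ span K {b}, hA, by rw [finrank_sup_span_singleton hbS]; omega, le_sup_left,
    hAU, le_sup_left, sup_le hSU ((span_singleton_le_iff_mem b U).2 hbU), fun h => hbA ?_⟩
  exact h ▸ mem_sup_right (mem_span_singleton_self b)

theorem exists_ge_le_finrank_inf_lt {S U : Submodule K M} (hm : 2 ≤ m)
    (hM : m + 2 ≤ finrank K M) (hS : finrank K S = m - 1) (hU : finrank K U = m + 1)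
    (hSU : S ≤ U) :
    ∃ C D : Submodule K M, finrank K C = m ∧ finrank K D = m ∧
      S ≤ C ∧ D ≤ U ∧ finrank K ↥(C ⊓ D) < m - 1 := by
  obtain ⟨x, hxS, hx0⟩ := exists_mem_ne_zero_of_ne_bot (p := S) fun h => by
    rw [h, finrank_bot] at hS
    omega
  obtain ⟨Q, hQ⟩ := exists_isCompl (span K {x})
  have hxQ : x ∉ Q := fun h => hx0 (disjoint_def.1 hQ.disjoint x (mem_span_singleton_self x) h)
  -- `D` avoids `x ∈ S`, so `C ⊓ D ≤ S ⊓ D < S` for any `C ≥ S` with `C ⊓ U = S`.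
  have hQU : m ≤ finrank K ↥(Q ⊓ U) := by
    have := finrank_add_eq_of_isCompl hQ
    have := finrank_sup_add_finrank_inf_eq Q U
    have := finrank_le (Q ⊔ U)
    rw [finrank_span_singleton hx0] at *
    omega
  obtain ⟨D, -, hDQU, hD⟩ := exists_le_le_finrank_eq_s7 (bot_le : ⊥ ≤ Q ⊓ U) (by simp) hQU
  obtain ⟨v, -, hvU⟩ := SetLike.exists_of_lt (lt_top_of_finrank_lt_finrank (s := U) (by omega))
  have hvS : v ∉ S := fun h => hvU (hSU h)
  have hC : finrank K ↥(S ⊔ span K {v}) = m := by rw [finrank_sup_span_singleton hvS]; omega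
  have hCU : (S ⊔ span K {v}) ⊓ U = S := by
    refine (eq_of_le_of_finrank_le (le_inf le_sup_left hSU) ?_).symm
    have := finrank_lt_finrank_of_lt (s := (S ⊔ span K {v}) ⊓ U)
      (inf_lt_left.2 fun h => hvU (h (mem_sup_right (mem_span_singleton_self v))))
    omega
  refine ⟨_, D, hC, hD, le_sup_left, hDQU.trans inf_le_right, ?_⟩
  calc finrank K ↥((S ⊔ span K {v}) ⊓ D) ≤ finrank K ↥(S ⊓ D) :=
        finrank_mono (le_inf ((inf_le_inf_left _ (hDQU.trans inf_le_right)).trans hCU.le)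
          inf_le_right)
    _ < finrank K S := finrank_lt_finrank_of_lt (inf_lt_left.2 fun h => hxQ (hDQU (h hxS)).1)
    _ = m - 1 := hS

theorem exists_finrank_inf_lt_of_ne {S T : Submodule K M} (hM : m + 1 ≤ finrank K M)
    (hS : finrank K S = m - 1) (hT : finrank K T = m - 1) (hST : S ≠ T) :
    ∃ S₁ U : Submodule K M, finrank K S₁ = m - 1 ∧ finrank K U = m + 1 ∧
      S ≤ U ∧ S₁ ≤ U ∧ finrank K ↥(S ⊓ T) < finrank K ↥(S₁ ⊓ T) := by
  obtain ⟨b, hbT, hbS⟩ := SetLike.not_le_iff_exists.1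
    fun h => hST (eq_of_le_of_finrank_eq h (hT.trans hS.symm)).symm
  have hSb := finrank_sup_span_singleton hbS
  obtain ⟨U, hSbU, -, hU⟩ := exists_le_le_finrank_eq_s7 (m := m + 1)
    (le_top : S ⊔ span K {b} ≤ ⊤) (by omega) (by rwa [finrank_top])
  have hSTb := finrank_sup_span_singleton (p := S ⊓ T) fun h => hbS h.1
  have := finrank_inf_lt_of_ne_s7 hS hT hST
  obtain ⟨S₁, hSTS₁, hS₁Sb, hS₁⟩ := exists_le_le_finrank_eq_s7 (m := m - 1)
    (sup_le_sup_right inf_le_left _ : S ⊓ T ⊔ span K {b} ≤ S ⊔ span K {b})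
    (by omega) (by omega)
  refine ⟨S₁, U, hS₁, hU, le_sup_left.trans hSbU, hS₁Sb.trans hSbU, ?_⟩
  calc finrank K ↥(S ⊓ T) < finrank K ↥(S ⊓ T ⊔ span K {b}) := by omega
    _ ≤ finrank K ↥(S₁ ⊓ T) :=
      finrank_mono (le_inf hSTS₁ (sup_le inf_le_right ((span_singleton_le_iff_mem b T).2 hbT)))

theorem induction_on_common_le (P : Submodule K M → Prop) (hM : m + 1 ≤ finrank K M)
    (hP : ∀ S T U : Submodule K M, finrank K S = m - 1 → finrank K T = m - 1 →
      finrank K U = m + 1 → S ≤ U → T ≤ U → P S → P T)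
    {S T : Submodule K M} (hS : finrank K S = m - 1) (hT : finrank K T = m - 1) (h : P S) :
    P T := by
  by_cases hST : S = T
  · exact hST ▸ h
  obtain ⟨S₁, U, hS₁, hU, hSU, hS₁U, hlt⟩ := exists_finrank_inf_lt_of_ne hM hS hT hST
  have := finrank_mono (inf_le_left : S₁ ⊓ T ≤ S₁)
  exact induction_on_common_le P hM hP hS₁ hT (hP S S₁ U hS hS₁ hU hSU hS₁U h)
termination_by m - 1 - finrank K ↥(S ⊓ T)
decreasing_by omega

end Submodule

section Embedding

variable {R V R' V' : Type*} [DivisionRing R] [AddCommGroup V] [Module R V]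
  [DivisionRing R'] [AddCommGroup V'] [Module R' V'] {k k' : ℕ}

theorem grassmannGraph.sub_one_le_finrank_inf_iff [FiniteDimensional R V]
    (X Y : {W : Submodule R V // finrank R W = k}) :
    k - 1 ≤ finrank R ↥(X.1 ⊓ Y.1) ↔ X = Y ∨ (grassmannGraph R V k).Adj X Y := by
  refine ⟨fun h => or_iff_not_imp_left.2 fun hXY => ⟨hXY, ?_⟩, ?_⟩
  · have := finrank_inf_lt_of_ne_s7 X.2 Y.2 fun h => hXY (Subtype.ext h)
    omega
  · rintro (rfl | hXY)
    · rw [inf_idem, X.2]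
      omega
    · exact hXY.2.ge

variable (f : {W : Submodule R V // finrank R W = k} → {W : Submodule R' V' // finrank R' W = k'})

/-- With `P = (S ≤ ·)` this says that `f` maps the star `[S⟩_k` into a star, with `P = (· ≤ U)`
that it maps the top `⟨U]_k` into a star. -/
def MapsIntoStar (P : Submodule R V → Prop) : Prop :=
  ∃ S' : Submodule R' V', finrank R' S' = k' - 1 ∧ ∀ X, P X.1 → S' ≤ (f X).1

def MapsIntoTop (P : Submodule R V → Prop) : Prop :=
  ∃ U' : Submodule R' V', finrank R' U' = k' + 1 ∧ ∀ X, P X.1 → (f X).1 ≤ U'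

def IsTypeA : Prop :=
  (∀ S : Submodule R V, finrank R S = k - 1 → MapsIntoStar f (S ≤ ·)) ∧
    ∀ U : Submodule R V, finrank R U = k + 1 → MapsIntoTop f (· ≤ U)

def IsTypeB : Prop :=
  (∀ S : Submodule R V, finrank R S = k - 1 → MapsIntoTop f (S ≤ ·)) ∧
    ∀ U : Submodule R V, finrank R U = k + 1 → MapsIntoStar f (· ≤ U)

namespace IsGraphEmbedding

variable {f} [FiniteDimensional R V] [FiniteDimensional R' V']
  (hf : IsGraphEmbedding (grassmannGraph R V k) (grassmannGraph R' V' k') f)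
include hf

theorem sub_one_le_finrank_inf_iff (X Y : {W : Submodule R V // finrank R W = k}) :
    k' - 1 ≤ finrank R' ↥((f X).1 ⊓ (f Y).1) ↔ k - 1 ≤ finrank R ↥(X.1 ⊓ Y.1) := by
  rw [grassmannGraph.sub_one_le_finrank_inf_iff, grassmannGraph.sub_one_le_finrank_inf_iff,
    hf.1.eq_iff, hf.2]

theorem mapsIntoStar_or_mapsIntoTop (hn' : k' - 1 ≤ finrank R' V') {P : Submodule R V → Prop}
    (hP : ∀ X Y : {W : Submodule R V // finrank R W = k}, P X.1 → P Y.1 →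
      k - 1 ≤ finrank R ↥(X.1 ⊓ Y.1)) :
    MapsIntoStar f P ∨ MapsIntoTop f P := by
  rcases exists_star_or_top_of_pairwise hn' (F := fun X : {X // P X.1} => (f X.1).1)
    (fun X => (f X.1).2) (fun X Y => (hf.sub_one_le_finrank_inf_iff _ _).2 (hP _ _ X.2 Y.2))
    with ⟨S', hS', h⟩ | ⟨U', hU', h⟩
  exacts [Or.inl ⟨S', hS', fun X hX => h ⟨X, hX⟩⟩,
    Or.inr ⟨U', hU', fun X hX => h ⟨X, hX⟩⟩]

theorem star_mapsIntoStar_or_mapsIntoTop (hn' : k' - 1 ≤ finrank R' V') {S : Submodule R V}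
    (hS : finrank R S = k - 1) : MapsIntoStar f (S ≤ ·) ∨ MapsIntoTop f (S ≤ ·) :=
  hf.mapsIntoStar_or_mapsIntoTop hn' fun _ _ hX hY => hS ▸ finrank_mono (le_inf hX hY)

theorem top_mapsIntoStar_or_mapsIntoTop (hn' : k' - 1 ≤ finrank R' V') {U : Submodule R V}
    (hU : finrank R U = k + 1) : MapsIntoStar f (· ≤ U) ∨ MapsIntoTop f (· ≤ U) :=
  hf.mapsIntoStar_or_mapsIntoTop hn' fun X Y hX hY =>
    sub_one_le_finrank_inf_of_sup_le X.2 Y.2 hU (sup_le hX hY)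

theorem not_mapsIntoStar_top_of_mapsIntoStar_star (hk : 2 ≤ k) (hn : k + 2 ≤ finrank R V)
    {S U : Submodule R V} (hS : finrank R S = k - 1) (hU : finrank R U = k + 1) (hSU : S ≤ U)
    (hstar : MapsIntoStar f (S ≤ ·)) : ¬MapsIntoStar f (· ≤ U) := by
  rintro ⟨B', hB', hB⟩
  obtain ⟨A', hA', hA⟩ := hstar
  obtain ⟨A, B, hAd, hBd, hSA, hAU, hSB, hBU, hAB⟩ := exists_ne_between (by omega) hS hU hSU
  have hfAB : (f ⟨A, hAd⟩).1 ≠ (f ⟨B, hBd⟩).1 := fun h => hAB congr($(hf.1 (Subtype.ext h)).1)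
  have hAB' : A' = B' :=
    (eq_inf_of_le_inf hA' (f _).2 (f _).2 hfAB (le_inf (hA _ hSA) (hA _ hSB))).trans
      (eq_inf_of_le_inf hB' (f _).2 (f _).2 hfAB (le_inf (hB _ hAU) (hB _ hBU))).symm
  obtain ⟨C, D, hCd, hDd, hSC, hDU, hCD⟩ := exists_ge_le_finrank_inf_lt hk hn hS hU hSU
  have := (hf.sub_one_le_finrank_inf_iff ⟨C, hCd⟩ ⟨D, hDd⟩).1
    (hA' ▸ finrank_mono (le_inf (hA _ hSC) (hAB' ▸ hB _ hDU)))
  exact (not_le.2 hCD) this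

theorem not_mapsIntoTop_top_of_mapsIntoTop_star (hk : 2 ≤ k) (hn : k + 2 ≤ finrank R V)
    {S U : Submodule R V} (hS : finrank R S = k - 1) (hU : finrank R U = k + 1) (hSU : S ≤ U)
    (hstar : MapsIntoTop f (S ≤ ·)) : ¬MapsIntoTop f (· ≤ U) := by
  rintro ⟨B', hB', hB⟩
  obtain ⟨A', hA', hA⟩ := hstar
  obtain ⟨A, B, hAd, hBd, hSA, hAU, hSB, hBU, hAB⟩ := exists_ne_between (by omega) hS hU hSU
  have hfAB : (f ⟨A, hAd⟩).1 ≠ (f ⟨B, hBd⟩).1 := fun h => hAB congr($(hf.1 (Subtype.ext h)).1)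
  have hAB' : A' = B' :=
    (sup_eq_of_sup_le hA' (f _).2 (f _).2 hfAB (sup_le (hA _ hSA) (hA _ hSB))).symm.trans
      (sup_eq_of_sup_le hB' (f _).2 (f _).2 hfAB (sup_le (hB _ hAU) (hB _ hBU)))
  obtain ⟨C, D, hCd, hDd, hSC, hDU, hCD⟩ := exists_ge_le_finrank_inf_lt hk hn hS hU hSU
  have := (hf.sub_one_le_finrank_inf_iff ⟨C, hCd⟩ ⟨D, hDd⟩).1
    (sub_one_le_finrank_inf_of_sup_le (f _).2 (f _).2 hA' (sup_le (hA _ hSC) (hAB' ▸ hB _ hDU)))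
  exact (not_le.2 hCD) this

variable (hk : 2 ≤ k) (hn : k + 2 ≤ finrank R V) (hn' : k' - 1 ≤ finrank R' V')
include hk hn hn'

theorem mapsIntoStar_star_iff_mapsIntoTop_top {S U : Submodule R V} (hS : finrank R S = k - 1)
    (hU : finrank R U = k + 1) (hSU : S ≤ U) :
    MapsIntoStar f (S ≤ ·) ↔ MapsIntoTop f (· ≤ U) :=
  ⟨fun h => (hf.top_mapsIntoStar_or_mapsIntoTop hn' hU).resolve_left
      (hf.not_mapsIntoStar_top_of_mapsIntoStar_star hk hn hS hU hSU h),
    fun h => (hf.star_mapsIntoStar_or_mapsIntoTop hn' hS).resolve_right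
      fun h' => hf.not_mapsIntoTop_top_of_mapsIntoTop_star hk hn hS hU hSU h' h⟩

theorem mapsIntoStar_star_iff {S T : Submodule R V} (hS : finrank R S = k - 1)
    (hT : finrank R T = k - 1) : MapsIntoStar f (S ≤ ·) ↔ MapsIntoStar f (T ≤ ·) := by
  have hstep (S T U : Submodule R V) (hS : finrank R S = k - 1) (hT : finrank R T = k - 1)
      (hU : finrank R U = k + 1) (hSU : S ≤ U) (hTU : T ≤ U) (h : MapsIntoStar f (S ≤ ·)) :
      MapsIntoStar f (T ≤ ·) :=
    (hf.mapsIntoStar_star_iff_mapsIntoTop_top hk hn hn' hT hU hTU).2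
      ((hf.mapsIntoStar_star_iff_mapsIntoTop_top hk hn hn' hS hU hSU).1 h)
  exact ⟨induction_on_common_le _ (by omega) hstep hS hT,
    induction_on_common_le _ (by omega) hstep hT hS⟩

theorem isTypeA_iff {S₀ : Submodule R V} (hS₀ : finrank R S₀ = k - 1) :
    IsTypeA f ↔ MapsIntoStar f (S₀ ≤ ·) := by
  refine ⟨fun h => h.1 S₀ hS₀, fun h =>
    ⟨fun S hS => (hf.mapsIntoStar_star_iff hk hn hn' hS₀ hS).1 h, fun U hU => ?_⟩⟩
  obtain ⟨S, -, hSU, hS⟩ := exists_le_le_finrank_eq_s7 (m := k - 1) (bot_le : ⊥ ≤ U) (by simp)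
    (by omega)
  exact (hf.mapsIntoStar_star_iff_mapsIntoTop_top hk hn hn' hS hU hSU).1
    ((hf.mapsIntoStar_star_iff hk hn hn' hS₀ hS).1 h)

theorem isTypeB_iff {S₀ : Submodule R V} (hS₀ : finrank R S₀ = k - 1) :
    IsTypeB f ↔ ¬MapsIntoStar f (S₀ ≤ ·) := by
  refine ⟨fun h hS₀f => ?_, fun h => ⟨fun S hS => ?_, fun U hU => ?_⟩⟩
  · obtain ⟨U, hS₀U, -, hU⟩ := exists_le_le_finrank_eq_s7 (m := k + 1) (le_top : S₀ ≤ ⊤)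
      (by omega) (by rw [finrank_top]; omega)
    exact hf.not_mapsIntoStar_top_of_mapsIntoStar_star hk hn hS₀ hU hS₀U hS₀f (h.2 U hU)
  · exact (hf.star_mapsIntoStar_or_mapsIntoTop hn' hS).resolve_left
      fun hSf => h ((hf.mapsIntoStar_star_iff hk hn hn' hS hS₀).1 hSf)
  · obtain ⟨S, -, hSU, hS⟩ := exists_le_le_finrank_eq_s7 (m := k - 1) (bot_le : ⊥ ≤ U)
      (by simp) (by omega)
    exact (hf.top_mapsIntoStar_or_mapsIntoTop hn' hU).resolve_right fun hUf =>
      h ((hf.mapsIntoStar_star_iff hk hn hn' hS hS₀).1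
        ((hf.mapsIntoStar_star_iff_mapsIntoTop_top hk hn hn' hS hU hSU).2 hUf))

end IsGraphEmbedding

end Embedding

theorem embedding_type_A_or_B_general
    (R V : Type*) [DivisionRing R] [AddCommGroup V] [Module R V] [FiniteDimensional R V]
    (R' V' : Type*) [DivisionRing R'] [AddCommGroup V'] [Module R' V'] [FiniteDimensional R' V']
    (n k n' k' : ℕ) (hn : Module.finrank R V = n) (hn' : Module.finrank R' V' = n')
    (hk1 : 2 ≤ k) (hk2 : k ≤ n - 2) (hk2' : k' ≤ n' - 2)
    (f : {W : Submodule R V // Module.finrank R W = k} →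
         {W : Submodule R' V' // Module.finrank R' W = k'})
    (hf : IsGraphEmbedding (grassmannGraph R V k) (grassmannGraph R' V' k') f) :
    Xor'
      -- (A) stars go into stars and tops go into tops
      ((∀ S : Submodule R V, Module.finrank R S = k - 1 →
          ∃ S' : Submodule R' V', Module.finrank R' S' = k' - 1 ∧
            ∀ X, S ≤ X.1 → S' ≤ (f X).1) ∧
       (∀ U : Submodule R V, Module.finrank R U = k + 1 →
          ∃ U' : Submodule R' V', Module.finrank R' U' = k' + 1 ∧
            ∀ X, X.1 ≤ U → (f X).1 ≤ U'))
      -- (B) stars go into tops and tops go into stars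
      ((∀ S : Submodule R V, Module.finrank R S = k - 1 →
          ∃ U' : Submodule R' V', Module.finrank R' U' = k' + 1 ∧
            ∀ X, S ≤ X.1 → (f X).1 ≤ U') ∧
       (∀ U : Submodule R V, Module.finrank R U = k + 1 →
          ∃ S' : Submodule R' V', Module.finrank R' S' = k' - 1 ∧
            ∀ X, X.1 ≤ U → S' ≤ (f X).1)) := by
  have hnk : k + 2 ≤ finrank R V := by omega
  have hnk' : k' - 1 ≤ finrank R' V' := by omega
  obtain ⟨S₀, -, -, hS₀⟩ := exists_le_le_finrank_eq_s7 (m := k - 1)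
    (bot_le : ⊥ ≤ (⊤ : Submodule R V)) (by simp) (by rw [finrank_top]; omega)
  change Xor (IsTypeA f) (IsTypeB f)
  rw [hf.isTypeA_iff hk1 hnk hnk' hS₀, hf.isTypeB_iff hk1 hnk hnk' hS₀]
  exact xor_not_right.2 Iff.rfl

/-- For every embedding `f` of `Γ_k(V)` in `Γ_{k'}(V')`, exactly one of the
following holds: (A) stars go to subsets of stars and tops to subsets of tops, or
(B) stars go to subsets of tops and tops to subsets of stars. -/
theorem embedding_type_A_or_B
    (R V : Type*) [DivisionRing R] [AddCommGroup V] [Module R V] [FiniteDimensional R V]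
    (R' V' : Type*) [DivisionRing R'] [AddCommGroup V'] [Module R' V'] [FiniteDimensional R' V']
    (n k n' k' : ℕ) (hn : Module.finrank R V = n) (hn' : Module.finrank R' V' = n')
    (hk1 : 2 ≤ k) (hk2 : k ≤ n - 2) (hk1' : 2 ≤ k') (hk2' : k' ≤ n' - 2)
    (f : {W : Submodule R V // Module.finrank R W = k} →
         {W : Submodule R' V' // Module.finrank R' W = k'})
    (hf : IsGraphEmbedding (grassmannGraph R V k) (grassmannGraph R' V' k') f) :
    Xor'
      -- (A) stars go into stars and tops go into tops
      ((∀ S : Submodule R V, Module.finrank R S = k - 1 →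
          ∃ S' : Submodule R' V', Module.finrank R' S' = k' - 1 ∧
            ∀ X, S ≤ X.1 → S' ≤ (f X).1) ∧
       (∀ U : Submodule R V, Module.finrank R U = k + 1 →
          ∃ U' : Submodule R' V', Module.finrank R' U' = k' + 1 ∧
            ∀ X, X.1 ≤ U → (f X).1 ≤ U'))
      -- (B) stars go into tops and tops go into stars
      ((∀ S : Submodule R V, Module.finrank R S = k - 1 →
          ∃ U' : Submodule R' V', Module.finrank R' U' = k' + 1 ∧
            ∀ X, S ≤ X.1 → (f X).1 ≤ U') ∧
       (∀ U : Submodule R V, Module.finrank R U = k + 1 →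
          ∃ S' : Submodule R' V', Module.finrank R' S' = k' - 1 ∧
            ∀ X, X.1 ≤ U → S' ≤ (f X).1)) :=
  embedding_type_A_or_B_general R V R' V' n k n' k' hn hn' hk1 hk2 hk2' f hf
end

section
/- Let V and V' be left vector spaces of finite dimensions n and n' over division rings R and R', let k ∈ {2,…,n−2} and k' ∈ {2,…,n'−2}, and assume k ≤ min{k', n−k, n'−k'}. Let S be a (k'−k)-dimensional subspace of V' and let l : V → V'/S be a semilinear 2k-embedding. Then the map f sending each k-dimensional subspace X of V to the preimage in V', under the quotient map V' → V'/S, of the span of l(X) takes values in the k'-dimensional subspaces of V' and is an isometric embedding of Γ_k(V) in Γ_{k'}(V') of type (A). -/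
/-!
Spans of images under a semilinear `2k`-embedding `l` preserve the dimension of subspaces of
dimension at most `2k`, hence also intersections `X ⊓ Y` of `k`-dimensional subspaces (compare
the dimensions of both sides via `X ⊔ Y`). Pulling back along `V' → V'/S` adds `dim S = k' - k`,
so `dim (f X ⊓ f Y) = dim (X ⊓ Y) + (k' - k)`. Since the distance in a Grassmann graph is
`k - dim (X ⊓ Y)`, `f` preserves distances. Stars and tops go into the star of `f T` and the top
of `f U` by monotonicity.
-/

open Module

open Submodule

section Grassmann

variable {K M : Type*} [DivisionRing K] [AddCommGroup M] [Module K M] [FiniteDimensional K M]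

theorem Submodule.exists_le_le_finrank_eq_s9 {p q : Submodule K M} (hpq : p ≤ q) {m : ℕ}
    (hp : finrank K p ≤ m) (hq : m ≤ finrank K q) :
    ∃ r : Submodule K M, p ≤ r ∧ r ≤ q ∧ finrank K r = m := by
  induction m with
  | zero => exact ⟨p, le_rfl, hpq, Nat.le_zero.mp hp⟩
  | succ m ih =>
    rcases hp.lt_or_eq with hlt | heq
    · obtain ⟨r, hpr, hrq, hr⟩ := ih (Nat.lt_succ_iff.mp hlt) (by omega)
      obtain ⟨x, hxq, hxr⟩ := SetLike.not_le_iff_exists.mp fun hqr : q ≤ r => by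
        have := finrank_mono hqr
        omega
      refine ⟨r ⊔ K ∙ x, hpr.trans le_sup_left,
        sup_le hrq ((span_singleton_le_iff_mem x q).mpr hxq), ?_⟩
      rw [finrank_sup_span_singleton hxr, hr]
    · exact ⟨p, le_rfl, hpq, heq⟩

namespace grassmannGraph

variable {k : ℕ} {X Y : {W : Submodule K M // finrank K W = k}}

theorem finrank_inf_le_s9 (X Y : {W : Submodule K M // finrank K W = k}) :
    finrank K ↥(X.1 ⊓ Y.1) ≤ k :=
  (finrank_mono inf_le_left).trans_eq X.2

theorem eq_of_le_finrank_inf (h : k ≤ finrank K ↥(X.1 ⊓ Y.1)) : X = Y := by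
  have hX : X.1 ⊓ Y.1 = X.1 := eq_of_le_of_finrank_le inf_le_left (X.2.trans_le h)
  have hY : X.1 ⊓ Y.1 = Y.1 := eq_of_le_of_finrank_le inf_le_right (Y.2.trans_le h)
  exact Subtype.ext (hX.symm.trans hY)

theorem finrank_inf_add_finrank_inf_le (X Y Z : {W : Submodule K M // finrank K W = k}) :
    finrank K ↥(X.1 ⊓ Y.1) + finrank K ↥(Y.1 ⊓ Z.1) ≤ k + finrank K ↥(X.1 ⊓ Z.1) := by
  have hsup : finrank K ↥(X.1 ⊓ Y.1 ⊔ Y.1 ⊓ Z.1) ≤ k :=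
    (finrank_mono (sup_le inf_le_right inf_le_left)).trans_eq Y.2
  have hinf : finrank K ↥(X.1 ⊓ Y.1 ⊓ (Y.1 ⊓ Z.1)) ≤ finrank K ↥(X.1 ⊓ Z.1) :=
    finrank_mono (le_inf (inf_le_left.trans inf_le_left) (inf_le_right.trans inf_le_right))
  have := finrank_sup_add_finrank_inf_eq (X.1 ⊓ Y.1) (Y.1 ⊓ Z.1)
  omega

theorem le_finrank_inf_add_length (w : (grassmannGraph K M k).Walk X Y) :
    k ≤ finrank K ↥(X.1 ⊓ Y.1) + w.length := by
  induction w with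
  | @nil u => rw [SimpleGraph.Walk.length_nil, inf_idem, u.2, add_zero]
  | @cons u v y huv p ih =>
    have := finrank_inf_add_finrank_inf_le u v y
    rw [SimpleGraph.Walk.length_cons]
    have := huv.2
    omega

/-- `Z` is spanned by a hyperplane of `X` containing `X ⊓ Y` and a vector of `Y` outside `X`. -/
theorem exists_adj_finrank_inf_lt_s9 (h : finrank K ↥(X.1 ⊓ Y.1) < k) :
    ∃ Z, (grassmannGraph K M k).Adj X Z ∧
      finrank K ↥(X.1 ⊓ Y.1) < finrank K ↥(Z.1 ⊓ Y.1) := by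
  obtain ⟨y, hyY, hyX⟩ := SetLike.not_le_iff_exists.mp fun hYX : Y.1 ≤ X.1 => by
    rw [inf_eq_right.mpr hYX, Y.2] at h
    exact h.false
  obtain ⟨H, hXYH, hHX, hH⟩ :=
    exists_le_le_finrank_eq_s9 (inf_le_left : X.1 ⊓ Y.1 ≤ X.1) (m := k - 1) (by omega) (by omega)
  have hyH : y ∉ H := fun hy => hyX (hHX hy)
  have hyZ : y ∈ H ⊔ K ∙ y := mem_sup_right (mem_span_singleton_self y)
  let Z : {W : Submodule K M // finrank K W = k} :=
    ⟨H ⊔ K ∙ y, by rw [finrank_sup_span_singleton hyH, hH]; omega⟩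
  have hXZ : X ≠ Z := fun he => hyX (he ▸ hyZ)
  have hHXZ : finrank K H ≤ finrank K ↥(X.1 ⊓ Z.1) := finrank_mono (le_inf hHX le_sup_left)
  have hXZk : finrank K ↥(X.1 ⊓ Z.1) < k :=
    (finrank_inf_le_s9 X Z).lt_of_ne fun he => hXZ (eq_of_le_finrank_inf he.ge)
  have hyXY : y ∉ X.1 ⊓ Y.1 := fun hy => hyX (mem_inf.mp hy).1
  have hZY : X.1 ⊓ Y.1 ⊔ K ∙ y ≤ Z.1 ⊓ Y.1 :=
    sup_le (le_inf (hXYH.trans le_sup_left) inf_le_right)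
      ((span_singleton_le_iff_mem y _).mpr (mem_inf.mpr ⟨hyZ, hyY⟩))
  refine ⟨Z, ⟨hXZ, by omega⟩, ?_⟩
  have := finrank_mono hZY
  rw [finrank_sup_span_singleton hyXY] at this
  omega

theorem exists_walk_length_le (X Y : {W : Submodule K M // finrank K W = k}) :
    ∃ w : (grassmannGraph K M k).Walk X Y, w.length ≤ k - finrank K ↥(X.1 ⊓ Y.1) := by
  by_cases h : k ≤ finrank K ↥(X.1 ⊓ Y.1)
  · obtain rfl := eq_of_le_finrank_inf h
    exact ⟨.nil, by simp⟩
  · obtain ⟨Z, hXZ, hZY⟩ := exists_adj_finrank_inf_lt_s9 (not_le.mp h)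
    obtain ⟨w, hw⟩ := exists_walk_length_le Z Y
    refine ⟨.cons hXZ w, ?_⟩
    rw [SimpleGraph.Walk.length_cons]
    omega
termination_by k - finrank K ↥(X.1 ⊓ Y.1)
decreasing_by omega

theorem preconnected : (grassmannGraph K M k).Preconnected :=
  fun X Y => ⟨(exists_walk_length_le X Y).choose⟩

theorem dist_eq (X Y : {W : Submodule K M // finrank K W = k}) :
    (grassmannGraph K M k).dist X Y = k - finrank K ↥(X.1 ⊓ Y.1) := by
  obtain ⟨w, hw⟩ := exists_walk_length_le X Y
  obtain ⟨p, hp⟩ := SimpleGraph.Reachable.exists_walk_length_eq_dist ⟨w⟩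
  have := le_finrank_inf_add_length p
  exact le_antisymm ((SimpleGraph.dist_le w).trans hw) (by omega)

end grassmannGraph

end Grassmann

theorem IsIsometricEmbedding.of_dist_eq {α β : Type*} {G : SimpleGraph α} {G' : SimpleGraph β}
    (hG : G.Preconnected) {f : α → β} (hf : ∀ a b, G'.dist (f a) (f b) = G.dist a b) :
    IsIsometricEmbedding G G' f := by
  refine ⟨⟨fun a b hab => (hG a b).dist_eq_zero_iff.mp ?_, fun a b => ?_⟩, hf⟩
  · rw [← hf, hab, SimpleGraph.dist_self]
  · rw [← SimpleGraph.dist_eq_one_iff_adj, ← SimpleGraph.dist_eq_one_iff_adj, hf]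

theorem grassmannGraph.isIsometricEmbedding_of_finrank_inf {K M K' M' : Type*}
    [DivisionRing K] [AddCommGroup M] [Module K M] [FiniteDimensional K M]
    [DivisionRing K'] [AddCommGroup M'] [Module K' M'] [FiniteDimensional K' M'] {k k' : ℕ}
    (hkk' : k ≤ k')
    (F : {W : Submodule K M // finrank K W = k} → {W : Submodule K' M' // finrank K' W = k'})
    (hF : ∀ X Y, finrank K' ↥((F X).1 ⊓ (F Y).1) = finrank K ↥(X.1 ⊓ Y.1) + (k' - k)) :
    IsIsometricEmbedding (grassmannGraph K M k) (grassmannGraph K' M' k') F :=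
  .of_dist_eq preconnected fun X Y => by
    rw [dist_eq, dist_eq, hF]
    have := finrank_inf_le_s9 X Y
    omega

theorem Submodule.finrank_comap_mkQ {K M : Type*} [DivisionRing K] [AddCommGroup M] [Module K M]
    [FiniteDimensional K M] (S : Submodule K M) (W : Submodule K (M ⧸ S)) :
    finrank K ↥(W.comap S.mkQ) = finrank K W + finrank K S := by
  let f := S.mkQ.domRestrict (W.comap S.mkQ)
  have hrange : LinearMap.range f = W := by
    rw [LinearMap.range_domRestrict, map_comap_eq_of_surjective S.mkQ_surjective]
  have hker : LinearMap.ker f = S.comap (W.comap S.mkQ).subtype := by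
    rw [LinearMap.ker_domRestrict, ker_mkQ]
  have := LinearMap.finrank_range_add_finrank_ker f
  rwa [hrange, hker, LinearEquiv.finrank_eq (comapSubtypeEquivOfLe (le_comap_mkQ S W)), eq_comm]
    at this

section SemilinearEmbedding

variable {R V R' V' : Type*} [DivisionRing R] [AddCommGroup V] [Module R V]
  [DivisionRing R'] [AddCommGroup V'] [Module R' V'] {σ : R →+* R'}

theorem Submodule.span_image_span (l : V →ₛₗ[σ] V') (t : Set V) :
    span R' (l '' span R t) = span R' (l '' t) :=
  le_antisymm (span_le.mpr (image_span_subset_span l t)) (span_mono (Set.image_mono subset_span))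

theorem Submodule.span_image_sup (l : V →ₛₗ[σ] V') (A B : Submodule R V) :
    span R' (l '' ↑(A ⊔ B)) = span R' (l '' A) ⊔ span R' (l '' B) := by
  rw [← span_eq A, ← span_eq B, ← span_union, span_image_span, Set.image_union, span_union,
    span_image_span, span_image_span]

namespace IsSemilinearMEmbedding

variable [FiniteDimensional R V] {l : V →ₛₗ[σ] V'} {m : ℕ}

/-- Extend `s` to a basis, then to an `m`-element independent set inside it. -/
theorem linearIndepOn (hl : IsSemilinearMEmbedding σ l m) (hm : m ≤ finrank R V)
    {s : Finset V} (hs : s.card ≤ m) (hind : LinearIndepOn R id (s : Set V)) :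
    LinearIndepOn R' l (s : Set V) := by
  obtain ⟨b, -, hsb, hbspan, hb⟩ := exists_linearIndepOn_id_extension hind (Set.subset_univ _)
  lift b to Finset V using hb.setFinite
  have hbcard : finrank R V ≤ b.card := by
    have htop : span R (b : Set V) = ⊤ := eq_top_iff.mpr fun x _ => hbspan (Set.mem_univ x)
    have := finrank_span_finset_le_card (R := R) b
    rwa [Set.finrank, htop, finrank_top] at this
  obtain ⟨u, hsu, hub, hu⟩ :=
    Finset.exists_subsuperset_card_eq (Finset.coe_subset.mp hsb) hs (hm.trans hbcard)
  have hlu : LinearIndepOn R' l (u : Set V) := hl.2 u hu (hb.mono (Finset.coe_subset.mpr hub))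
  exact hlu.mono (Finset.coe_subset.mpr hsu)

theorem finrank_span_image (hl : IsSemilinearMEmbedding σ l m) (hm : m ≤ finrank R V)
    {A : Submodule R V} (hA : finrank R A ≤ m) :
    finrank R' (span R' (l '' A)) = finrank R A := by
  classical
  obtain ⟨b, -, hbA, hb⟩ := exists_linearIndependent R (A : Set V)
  lift b to Finset V using hb.setFinite
  rw [span_eq] at hbA
  have hb' : LinearIndepOn R id (b : Set V) := hb
  have hcard : finrank R A = b.card := by rw [← hbA, finrank_span_finset_eq_card hb']
  have hlb : LinearIndepOn R' id ((b.image l : Finset V') : Set V') := by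
    rw [Finset.coe_image]
    exact (hl.linearIndepOn hm (hcard ▸ hA) hb').id_image
  calc finrank R' (span R' (l '' A))
      = finrank R' (span R' ((b.image l : Finset V') : Set V')) := by
        rw [← hbA, span_image_span, Finset.coe_image]
    _ = finrank R A := by
        rw [finrank_span_finset_eq_card hlb, Finset.card_image_of_injective _ hl.1, hcard]

theorem span_image_inf [FiniteDimensional R' V'] (hl : IsSemilinearMEmbedding σ l m)
    (hm : m ≤ finrank R V) {A B : Submodule R V} (hAB : finrank R ↥(A ⊔ B) ≤ m) :
    span R' (l '' ↑(A ⊓ B)) = span R' (l '' A) ⊓ span R' (l '' B) := by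
  have hA := (finrank_mono le_sup_left).trans hAB
  have hB := (finrank_mono le_sup_right).trans hAB
  have hAB' : finrank R ↥(A ⊓ B) ≤ m := (finrank_mono inf_le_sup).trans hAB
  have hV := finrank_sup_add_finrank_inf_eq A B
  have hV' := finrank_sup_add_finrank_inf_eq (span R' (l '' A)) (span R' (l '' B))
  rw [← span_image_sup, hl.finrank_span_image hm hAB, hl.finrank_span_image hm hA,
    hl.finrank_span_image hm hB] at hV'
  refine eq_of_le_of_finrank_eq (le_inf (span_mono (Set.image_mono inf_le_left))
    (span_mono (Set.image_mono inf_le_right))) ?_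
  rw [hl.finrank_span_image hm hAB']
  omega

end IsSemilinearMEmbedding

end SemilinearEmbedding

section PreimageSpanImage

variable {R V R' V' : Type*} [DivisionRing R] [AddCommGroup V] [Module R V]
  [DivisionRing R'] [AddCommGroup V'] [Module R' V'] {σ : R →+* R'}
  (S : Submodule R' V') (l : V →ₛₗ[σ] V' ⧸ S)

def preimageSpanImage (A : Submodule R V) : Submodule R' V' :=
  (span R' (l '' A)).comap S.mkQ

theorem preimageSpanImage_mono : Monotone (preimageSpanImage S l) :=
  fun _ _ h => comap_mono (span_mono (Set.image_mono h))

variable [FiniteDimensional R V] [FiniteDimensional R' V'] {S l} {m : ℕ}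

theorem finrank_preimageSpanImage (hl : IsSemilinearMEmbedding σ l m) (hm : m ≤ finrank R V)
    {A : Submodule R V} (hA : finrank R A ≤ m) :
    finrank R' (preimageSpanImage S l A) = finrank R A + finrank R' S := by
  rw [preimageSpanImage, finrank_comap_mkQ, hl.finrank_span_image hm hA]

theorem preimageSpanImage_inf (hl : IsSemilinearMEmbedding σ l m) (hm : m ≤ finrank R V)
    {A B : Submodule R V} (hAB : finrank R ↥(A ⊔ B) ≤ m) :
    preimageSpanImage S l (A ⊓ B) = preimageSpanImage S l A ⊓ preimageSpanImage S l B := by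
  rw [preimageSpanImage, hl.span_image_inf hm hAB, comap_inf]; rfl

end PreimageSpanImage

theorem typeA_construction_isometric_general
    (R V : Type*) [DivisionRing R] [AddCommGroup V] [Module R V] [FiniteDimensional R V]
    (R' V' : Type*) [DivisionRing R'] [AddCommGroup V'] [Module R' V'] [FiniteDimensional R' V']
    (n k n' k' : ℕ) (hn : Module.finrank R V = n)
    (hk1 : 2 ≤ k)
    (hkk : k ≤ min k' (min (n - k) (n' - k')))
    (S : Submodule R' V') (hS : Module.finrank R' S = k' - k)
    (σ : R →+* R') (l : V →ₛₗ[σ] (V' ⧸ S))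
    (hl : IsSemilinearMEmbedding σ l (2 * k)) :
    (∀ X : Submodule R V, Module.finrank R X = k →
        Module.finrank R' ((Submodule.span R' (l '' (X : Set V))).comap S.mkQ) = k') ∧
    ∃ F : {W : Submodule R V // Module.finrank R W = k} →
          {W : Submodule R' V' // Module.finrank R' W = k'},
      (∀ X, (F X).1 = (Submodule.span R' (l '' (X.1 : Set V))).comap S.mkQ) ∧
      IsIsometricEmbedding (grassmannGraph R V k) (grassmannGraph R' V' k') F ∧
      -- type (A): stars go into stars and tops go into tops
      (∀ T : Submodule R V, Module.finrank R T = k - 1 →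
          ∃ T' : Submodule R' V', Module.finrank R' T' = k' - 1 ∧
            ∀ X, T ≤ X.1 → T' ≤ (F X).1) ∧
      (∀ U : Submodule R V, Module.finrank R U = k + 1 →
          ∃ U' : Submodule R' V', Module.finrank R' U' = k' + 1 ∧
            ∀ X, X.1 ≤ U → (F X).1 ≤ U') := by
  have hm : 2 * k ≤ finrank R V := by omega
  have hdim {A : Submodule R V} (hA : finrank R A ≤ 2 * k) :
      finrank R' (preimageSpanImage S l A) = finrank R A + (k' - k) :=
    hS ▸ finrank_preimageSpanImage hl hm hA
  have hdimk (X : Submodule R V) (hX : finrank R X = k) :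
      finrank R' (preimageSpanImage S l X) = k' := by
    rw [hdim (by omega), hX]
    omega
  refine ⟨hdimk, fun X => ⟨preimageSpanImage S l X.1, hdimk X.1 X.2⟩, fun X => rfl,
    grassmannGraph.isIsometricEmbedding_of_finrank_inf (by omega) _ fun X Y => ?_,
    fun T hT => ⟨preimageSpanImage S l T, by rw [hdim (by omega)]; omega,
      fun X hTX => preimageSpanImage_mono S l hTX⟩,
    fun U hU => ⟨preimageSpanImage S l U, by rw [hdim (by omega)]; omega,
      fun X hXU => preimageSpanImage_mono S l hXU⟩⟩
  have hXY : finrank R ↥(X.1 ⊔ Y.1) ≤ 2 * k := by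
    have := finrank_add_le_finrank_add_finrank X.1 Y.1
    omega
  rw [← preimageSpanImage_inf hl hm hXY]
  exact hdim ((finrank_mono inf_le_sup).trans hXY)

/-- If `k ≤ min k' (n-k) (n'-k')`, `S` is a `(k'-k)`-dimensional subspace of
`V'` and `l : V → V'/S` is a semilinear `2k`-embedding, then the map sending each
`k`-dimensional subspace `X` of `V` to the preimage in `V'` of the span of `l(X)`
takes values in `k'`-dimensional subspaces and is an isometric embedding of `Γ_k(V)`
in `Γ_{k'}(V')` of type (A). -/
theorem typeA_construction_isometric
    (R V : Type*) [DivisionRing R] [AddCommGroup V] [Module R V] [FiniteDimensional R V]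
    (R' V' : Type*) [DivisionRing R'] [AddCommGroup V'] [Module R' V'] [FiniteDimensional R' V']
    (n k n' k' : ℕ) (hn : Module.finrank R V = n) (hn' : Module.finrank R' V' = n')
    (hk1 : 2 ≤ k) (hk2 : k ≤ n - 2) (hk1' : 2 ≤ k') (hk2' : k' ≤ n' - 2)
    (hkk : k ≤ min k' (min (n - k) (n' - k')))
    (S : Submodule R' V') (hS : Module.finrank R' S = k' - k)
    (σ : R →+* R') (l : V →ₛₗ[σ] (V' ⧸ S))
    (hl : IsSemilinearMEmbedding σ l (2 * k)) :
    (∀ X : Submodule R V, Module.finrank R X = k →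
        Module.finrank R' ((Submodule.span R' (l '' (X : Set V))).comap S.mkQ) = k') ∧
    ∃ F : {W : Submodule R V // Module.finrank R W = k} →
          {W : Submodule R' V' // Module.finrank R' W = k'},
      (∀ X, (F X).1 = (Submodule.span R' (l '' (X.1 : Set V))).comap S.mkQ) ∧
      IsIsometricEmbedding (grassmannGraph R V k) (grassmannGraph R' V' k') F ∧
      -- type (A): stars go into stars and tops go into tops
      (∀ T : Submodule R V, Module.finrank R T = k - 1 →
          ∃ T' : Submodule R' V', Module.finrank R' T' = k' - 1 ∧
            ∀ X, T ≤ X.1 → T' ≤ (F X).1) ∧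
      (∀ U : Submodule R V, Module.finrank R U = k + 1 →
          ∃ U' : Submodule R' V', Module.finrank R' U' = k' + 1 ∧
            ∀ X, X.1 ≤ U → (F X).1 ≤ U') :=
  typeA_construction_isometric_general R V R' V' n k n' k' hn hk1 hkk S hS σ l hl
end

section
/- Let V be a left vector space of finite dimension n over a division ring R, V' a left vector space of finite dimension n' over a division ring R' with n ≤ n', let σ : R → R' be a ring homomorphism and let l : V → V' be an injective σ-semilinear map. Then l maps every linearly independent n-element subset of V onto a linearly independent n-element subset of V' if and only if for every linear automorphism u of V there exists a linear automorphism u' of V' such that l ∘ u = u' ∘ l. -/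
open Module

/-!
A semilinear embedding `l` preserving independence of `n`-sets sends every basis of `V` to an
independent family, and two independent families of the same size in `V'` are exchanged by an
automorphism of `V'` (extend both to bases); applied to a basis `b` and to `u ∘ b` this yields
`u'`. Conversely, if a relation `∑ cᵢ • l xᵢ = 0` with `c_k ≠ 0` held for a basis `(xᵢ)`, the
transvection `x_k ↦ x_k + x_j` of `V` lifts to some `u'`, and applying `u'` to the relation
leaves `c_k • l x_j = 0`, contradicting injectivity.
-/

theorem Module.Basis.sumExtend_inl {K W ι : Type*} [DivisionRing K] [AddCommGroup W] [Module K W]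
    {v : ι → W} (hv : LinearIndependent K v) (i : ι) :
    Basis.sumExtend hv (.inl i) = v i := by
  simp only [Basis.sumExtend, Basis.reindex_apply, Basis.extend_apply_self]
  rfl

instance Module.Basis.finite_sumExtendIndex {K W ι : Type*} [DivisionRing K] [AddCommGroup W]
    [Module K W] [FiniteDimensional K W] {v : ι → W} (hv : LinearIndependent K v) :
    Finite (Basis.sumExtendIndex hv) :=
  have := Module.Finite.finite_basis (Basis.sumExtend hv)
  Finite.sum_right ι

theorem exists_linearEquiv_apply_eq_of_linearIndependent {K W ι : Type*} [DivisionRing K]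
    [AddCommGroup W] [Module K W] [FiniteDimensional K W] {f g : ι → W}
    (hf : LinearIndependent K f) (hg : LinearIndependent K g) :
    ∃ e : W ≃ₗ[K] W, ∀ i, e (f i) = g i := by
  have : Finite ι := hf.finite
  have hcard : Nat.card (Basis.sumExtendIndex hf) = Nat.card (Basis.sumExtendIndex hg) := by
    have hf' := finrank_eq_nat_card_basis (Basis.sumExtend hf)
    have hg' := finrank_eq_nat_card_basis (Basis.sumExtend hg)
    rw [Nat.card_sum] at hf' hg'
    omega
  obtain ⟨e⟩ := Finite.card_eq.mp hcard
  refine ⟨(Basis.sumExtend hf).equiv (Basis.sumExtend hg) ((Equiv.refl ι).sumCongr e), fun i => ?_⟩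
  rw [← Basis.sumExtend_inl hf, ← Basis.sumExtend_inl hg, Basis.equiv_apply]
  rfl

theorem LinearIndependent.comp_of_forall_finset {K K' V V' ι : Type*} [Ring K] [Nontrivial K]
    [Ring K'] [AddCommGroup V] [Module K V] [AddCommGroup V'] [Module K' V'] [Fintype ι]
    {v : ι → V} (hv : LinearIndependent K v) (f : V → V')
    (h : ∀ s : Finset V, s.card = Fintype.card ι →
      LinearIndepOn K id (s : Set V) → LinearIndepOn K' f (s : Set V)) :
    LinearIndependent K' (f ∘ v) := by
  classical
  have hrange : ((Finset.univ.image v : Finset V) : Set V) = Set.range v := by simp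
  have himage := h (Finset.univ.image v) (Finset.card_image_of_injective _ hv.injective)
    (hrange ▸ hv.linearIndepOn_id)
  rw [hrange] at himage
  exact (linearIndepOn_range_iff hv.injective f).mp himage

theorem linearIndependent_of_forall_exists_transvection {K M ι : Type*} [DivisionRing K]
    [AddCommGroup M] [Module K M] [Fintype ι] [DecidableEq ι] {v : ι → M} (hv : ∀ i, v i ≠ 0)
    (h : ∀ j k, j ≠ k → ∃ t : M →ₗ[K] M, ∀ i, t (v i) = v i + if i = k then v j else 0) :
    LinearIndependent K v := by
  rw [Fintype.linearIndependent_iff]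
  intro c hc k
  by_contra hck
  by_cases hsingle : ∀ j, j = k
  · have hk : c k • v k = 0 := by
      rwa [Fintype.sum_eq_single k fun j hj => absurd (hsingle j) hj] at hc
    exact hv k ((smul_eq_zero.mp hk).resolve_left hck)
  · push Not at hsingle
    obtain ⟨j, hjk⟩ := hsingle
    obtain ⟨t, ht⟩ := h j k hjk
    have hj : c k • v j = 0 := by
      have := congrArg t hc
      rw [map_sum, map_zero] at this
      simpa only [map_smul, ht, smul_add, Finset.sum_add_distrib, hc, smul_ite, smul_zero,
        Finset.sum_ite_eq', Finset.mem_univ, if_true, zero_add] using this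
    exact hv j ((smul_eq_zero.mp hj).resolve_left hck)

theorem Module.Basis.exists_linearEquiv_apply_eq_add_ite {K V ι : Type*} [Ring K] [AddCommGroup V]
    [Module K V] [DecidableEq ι] (b : Basis ι K V) {j k : ι} (hjk : j ≠ k) :
    ∃ u : V ≃ₗ[K] V, ∀ i, u (b i) = b i + if i = k then b j else 0 := by
  refine ⟨LinearEquiv.transvection (f := b.coord k) (v := b j) (by simp [hjk]), fun i => ?_⟩
  rw [LinearEquiv.transvection.apply, Basis.coord_apply, Basis.repr_self, Finsupp.single_apply]
  split_ifs <;> simp_all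

theorem semilinear_embedding_characterization_general
    (R V : Type*) [DivisionRing R] [AddCommGroup V] [Module R V] [FiniteDimensional R V]
    (R' V' : Type*) [DivisionRing R'] [AddCommGroup V'] [Module R' V'] [FiniteDimensional R' V']
    (n : ℕ) (hn : Module.finrank R V = n)
    (σ : R →+* R') (l : V →ₛₗ[σ] V') (hinj : Function.Injective l) :
    (∀ s : Finset V, s.card = n →
        LinearIndependent R (fun x : s => (x : V)) →
        LinearIndependent R' (fun x : s => l x)) ↔
    (∀ u : V ≃ₗ[R] V, ∃ u' : V' ≃ₗ[R'] V', ∀ x : V, l (u x) = u' (l x)) := by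
  classical
  constructor
  · intro h u
    let b := Module.finBasis R V
    have hcard : Fintype.card (Fin (finrank R V)) = n := by simp [hn]
    obtain ⟨u', hu'⟩ := exists_linearEquiv_apply_eq_of_linearIndependent
      (b.linearIndependent.comp_of_forall_finset l (hcard ▸ h))
      ((b.map u).linearIndependent.comp_of_forall_finset l (hcard ▸ h))
    have hcomm : (l.comp (u : V →ₗ[R] V) : V →ₛₗ[σ] V') = (u' : V' →ₗ[R'] V').comp l :=
      b.ext fun i => (hu' i).symm
    exact ⟨u', LinearMap.congr_fun hcomm⟩
  · intro h s hs hli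
    refine linearIndependent_of_forall_exists_transvection
      (fun x hx => hli.ne_zero x (hinj (hx.trans (map_zero l).symm))) fun j k hjk => ?_
    have : Nonempty s := ⟨k⟩
    let b : Basis s R V := basisOfLinearIndependentOfCardEqFinrank hli (by simp [hs, hn])
    have hb : ⇑b = (↑) := coe_basisOfLinearIndependentOfCardEqFinrank hli _
    obtain ⟨u, hu⟩ := b.exists_linearEquiv_apply_eq_add_ite hjk
    obtain ⟨u', hu'⟩ := h u
    refine ⟨u', fun i => ?_⟩
    simp only [LinearEquiv.coe_coe, ← hu', hb] at hu ⊢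
    rw [hu, map_add]
    split_ifs <;> simp

/-- (Theorem 5.1) An injective semilinear map `l : V → V'` (with
`n = dim V ≤ dim V' = n'`) sends every linearly independent `n`-element subset of `V`
onto a linearly independent `n`-element subset of `V'` iff every linear automorphism
`u` of `V` admits a linear automorphism `u'` of `V'` with `l ∘ u = u' ∘ l`. -/
theorem semilinear_embedding_characterization
    (R V : Type*) [DivisionRing R] [AddCommGroup V] [Module R V] [FiniteDimensional R V]
    (R' V' : Type*) [DivisionRing R'] [AddCommGroup V'] [Module R' V'] [FiniteDimensional R' V']
    (n n' : ℕ) (hn : Module.finrank R V = n) (hn' : Module.finrank R' V' = n')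
    (hnn : n ≤ n')
    (σ : R →+* R') (l : V →ₛₗ[σ] V') (hinj : Function.Injective l) :
    (∀ s : Finset V, s.card = n →
        LinearIndependent R (fun x : s => (x : V)) →
        LinearIndependent R' (fun x : s => l x)) ↔
    (∀ u : V ≃ₗ[R] V, ∃ u' : V' ≃ₗ[R'] V', ∀ x : V, l (u x) = u' (l x)) :=
  semilinear_embedding_characterization_general R V R' V' n hn σ l hinj
end
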